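/- arXiv:1804.09346 — 15 statements merged into one kernel-verified Lean document; each statement's English description precedes it below -/
import Mathlib

section
/- Let ⟨A,·⟩ be a groupoid with an identity element 1 (i.e. 1·a = a·1 = a for all a ∈ A). Then ⟨A,·⟩ is an Abelian algebra if and only if ⟨A,·⟩ is a commutative semigroup in which for all a,b ∈ A the equation a·x = b has at most one solution (equivalently, a·c₁ = a·c₂ implies c₁ = c₂ for all a,c₁,c₂ ∈ A). -/
universe u

/-- Terms (polynomial operations) of a groupoid `⟨A, op⟩` in `n` variables,
built from variables, constants and the binary operation. -/
inductive GTerm (A : Type u) (n : ℕ) : Type u where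
  | var : Fin n → GTerm A n
  | const : A → GTerm A n
  | mul : GTerm A n → GTerm A n → GTerm A n

/-- Evaluation of a term under the binary operation `op` and an assignment of variables. -/
def GTerm.eval {A : Type u} (op : A → A → A) : {n : ℕ} → GTerm A n → (Fin n → A) → A
  | _, .var i, v => v i
  | _, .const a, _ => a
  | _, .mul s t, v => op (GTerm.eval op s v) (GTerm.eval op t v)

/-- A groupoid `⟨A, op⟩` is an Abelian algebra: for every polynomial operation
`t(x, y₁, …, yₙ)` and all elements `u, v, c₁, …, cₙ, d₁, …, dₙ`,
`t(u, c̄) = t(u, d̄)` implies `t(v, c̄) = t(v, d̄)`. -/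
def IsAbelianGroupoid {A : Type u} (op : A → A → A) : Prop :=
  ∀ (n : ℕ) (t : GTerm A (n + 1)) (u v : A) (c d : Fin n → A),
    t.eval op (Fin.cons u c) = t.eval op (Fin.cons u d) →
    t.eval op (Fin.cons v c) = t.eval op (Fin.cons v d)

/-- Iterated multiplication by `x` on the left: `pw op x k a = x·(x·(⋯·(x·a)))`. -/
def pw {A : Type u} (op : A → A → A) (x : A) : ℕ → A → A
  | 0, a => a
  | k+1, a => op x (pw op x k a)

theorem pw_add {A : Type u} (op : A → A → A) (x : A) (k l : ℕ) (a : A) :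
    pw op x (k + l) a = pw op x k (pw op x l a) := by
  induction k with
  | zero => simp [pw]
  | succ k ih => simp [Nat.succ_add, pw, ih]

theorem fin_cons_one {A : Type u} (a : A) (w : Fin 2 → A) : (Fin.cons a w : Fin 3 → A) 1 = w 0 := rfl

theorem fin_cons_two {A : Type u} (a : A) (w : Fin 2 → A) : (Fin.cons a w : Fin 3 → A) 2 = w 1 := rfl

theorem fin_cons_one' {A : Type u} (a : A) (w : Fin 1 → A) : (Fin.cons a w : Fin 2 → A) 1 = w 0 := rfl

/-- A groupoid with identity `e` is an Abelian algebra iff it is a commutative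
semigroup in which `a·x = b` has at most one solution. -/
theorem stmt_0 {A : Type u} (op : A → A → A) (e : A)
    (he : ∀ a : A, op e a = a ∧ op a e = a) :
    IsAbelianGroupoid op ↔
      ((∀ a b c : A, op (op a b) c = op a (op b c)) ∧
       (∀ a b : A, op a b = op b a) ∧
       (∀ a c₁ c₂ : A, op a c₁ = op a c₂ → c₁ = c₂)) := by
  constructor
  · intro hab
    refine ⟨?_, ?_, ?_⟩
    · -- associativity
      intro a b c
      have := hab 2 (.mul (.mul (.var 0) (.var (Fin.succ 0))) (.var (Fin.succ (Fin.succ 0)))) e a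
        (Fin.cons b (Fin.cons c Fin.elim0)) (Fin.cons (op b c) (Fin.cons e Fin.elim0))
        (by simp [GTerm.eval, Fin.cons_zero, Fin.cons_succ, fin_cons_one, fin_cons_two, fin_cons_one', (he _).1, (he _).2])
      simpa [GTerm.eval, Fin.cons_zero, Fin.cons_succ, fin_cons_one, fin_cons_two, fin_cons_one', (he _).1, (he _).2] using this
    · -- commutativity
      intro a b
      have := hab 2 (.mul (.var (Fin.succ 0)) (.mul (.var 0) (.var (Fin.succ (Fin.succ 0))))) e a
        (Fin.cons b (Fin.cons e Fin.elim0)) (Fin.cons e (Fin.cons b Fin.elim0))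
        (by simp [GTerm.eval, Fin.cons_zero, Fin.cons_succ, fin_cons_one, fin_cons_two, fin_cons_one', (he _).1, (he _).2])
      simpa [GTerm.eval, Fin.cons_zero, Fin.cons_succ, fin_cons_one, fin_cons_two, fin_cons_one', (he _).1, (he _).2] using this.symm
    · -- cancellation
      intro a c₁ c₂ h
      have := hab 1 (.mul (.var 0) (.var (Fin.succ 0))) a e
        (Fin.cons c₁ Fin.elim0) (Fin.cons c₂ Fin.elim0)
        (by simpa [GTerm.eval, Fin.cons_zero, Fin.cons_succ, fin_cons_one, fin_cons_two, fin_cons_one'] using h)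
      simpa [GTerm.eval, Fin.cons_zero, Fin.cons_succ, fin_cons_one, fin_cons_two, fin_cons_one', (he _).1] using this
  · rintro ⟨assoc, comm, cancel⟩
    have op_pw : ∀ (x : A) (k : ℕ) (a b : A), op a (pw op x k b) = pw op x k (op a b) := by
      intro x k
      induction k with
      | zero => intro a b; rfl
      | succ k ih =>
        intro a b
        calc op a (op x (pw op x k b)) = op x (op a (pw op x k b)) := by
              rw [← assoc, comm a x, assoc]
          _ = op x (pw op x k (op a b)) := by rw [ih]
    have cancel_pw : ∀ (x : A) (k : ℕ) (a b : A), pw op x k a = pw op x k b → a = b := by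
      intro x k
      induction k with
      | zero => intro a b h; exact h
      | succ k ih => intro a b h; exact ih a b (cancel x _ _ h)
    have key : ∀ (n : ℕ) (t : GTerm A (n + 1)), ∃ (k : ℕ) (f : (Fin n → A) → A),
        ∀ (x : A) (c : Fin n → A), t.eval op (Fin.cons x c) = pw op x k (f c) := by
      intro n t
      induction t with
      | var i =>
        refine Fin.cases ?_ ?_ i
        · exact ⟨1, fun _ => e, fun x c => by simp [GTerm.eval, pw, (he _).2]⟩
        · intro j
          exact ⟨0, fun c => c j, fun x c => by simp [GTerm.eval, pw]⟩
      | const a => exact ⟨0, fun _ => a, fun x c => by simp [GTerm.eval, pw]⟩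
      | mul s t ihs iht =>
        obtain ⟨k₁, f, hf⟩ := ihs
        obtain ⟨k₂, g, hg⟩ := iht
        refine ⟨k₁ + k₂, fun c => op (f c) (g c), fun x c => ?_⟩
        simp only [GTerm.eval]
        calc op (GTerm.eval op s (Fin.cons x c)) (GTerm.eval op t (Fin.cons x c))
            = op (pw op x k₁ (f c)) (pw op x k₂ (g c)) := by rw [hf, hg]
          _ = pw op x k₁ (op (pw op x k₂ (g c)) (f c)) := by rw [comm, op_pw]
          _ = pw op x k₁ (pw op x k₂ (op (f c) (g c))) := by rw [comm _ (f c), op_pw]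
          _ = pw op x (k₁ + k₂) (op (f c) (g c)) := (pw_add op x k₁ k₂ _).symm
    intro n t u v c d h
    obtain ⟨k, f, hf⟩ := key n t
    rw [hf, hf] at h ⊢
    rw [cancel_pw u k _ _ h]
end

section
/- A finite groupoid with an identity element is an Abelian algebra if and only if its operation makes it an Abelian group. -/
universe u

/-- iterated power under `op` with unit `e` -/
def gpow {A : Type u} (op : A → A → A) (e : A) : ℕ → A → A
  | 0, _ => e
  | k+1, a => op a (gpow op e k a)

lemma mul4 {A : Type u} (op : A → A → A)
    (hassoc : ∀ a b c : A, op (op a b) c = op a (op b c))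
    (hcomm : ∀ a b : A, op a b = op b a)
    (a b c d : A) : op (op a b) (op c d) = op (op a c) (op b d) := by
  rw [hassoc, ← hassoc b c d, hcomm b c, hassoc c b d, ← hassoc]

lemma gpow_add {A : Type u} (op : A → A → A) (e : A)
    (he : ∀ a : A, op e a = a ∧ op a e = a)
    (hassoc : ∀ a b c : A, op (op a b) c = op a (op b c))
    (k l : ℕ) (a : A) :
    gpow op e (k + l) a = op (gpow op e k a) (gpow op e l a) := by
  induction k with
  | zero => simp [gpow, (he _).1]
  | succ k ih =>
      have h : k + 1 + l = (k + l) + 1 := by omega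
      rw [h]
      simp only [gpow, ih, hassoc]

lemma eval_decomp {A : Type u} (op : A → A → A) (e : A)
    (he : ∀ a : A, op e a = a ∧ op a e = a)
    (hassoc : ∀ a b c : A, op (op a b) c = op a (op b c))
    (hcomm : ∀ a b : A, op a b = op b a) :
    ∀ {n : ℕ} (t : GTerm A (n + 1)),
    ∃ (k : ℕ) (g : (Fin n → A) → A), ∀ (u : A) (c : Fin n → A),
      t.eval op (Fin.cons u c) = op (gpow op e k u) (g c) := by
  intro n t
  induction t with
  | var i =>
      refine Fin.cases ?_ ?_ i
      · exact ⟨1, fun _ => e, fun u c => by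
          simp [GTerm.eval, gpow, (he _).2]⟩
      · intro j
        exact ⟨0, fun c => c j, fun u c => by
          simp [GTerm.eval, gpow, (he _).1]⟩
  | const a => exact ⟨0, fun _ => a, fun u c => by simp [GTerm.eval, gpow, (he _).1]⟩
  | mul s t ihs iht =>
      obtain ⟨ks, gs, hs⟩ := ihs
      obtain ⟨kt, gt, ht⟩ := iht
      refine ⟨ks + kt, fun c => op (gs c) (gt c), fun u c => ?_⟩
      simp only [GTerm.eval, hs, ht, gpow_add op e he hassoc]
      exact mul4 op hassoc hcomm _ _ _ _

/-- A finite groupoid with identity `e` is an Abelian algebra iff its operation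
makes it an Abelian group. -/
theorem stmt_1 {A : Type u} [Finite A] (op : A → A → A) (e : A)
    (he : ∀ a : A, op e a = a ∧ op a e = a) :
    IsAbelianGroupoid op ↔
      ((∀ a b c : A, op (op a b) c = op a (op b c)) ∧
       (∀ a b : A, op a b = op b a) ∧
       (∀ a : A, ∃ b : A, op a b = e)) := by
  have c2 : ∀ (x : A) (f : Fin 2 → A), (Fin.cons x f : Fin 3 → A) 2 = f 1 := fun _ _ => rfl
  have c1 : ∀ (x : A) (f : Fin 2 → A), (Fin.cons x f : Fin 3 → A) 1 = f 0 := fun _ _ => rfl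
  have b1 : ∀ (x : A) (f : Fin 1 → A), (Fin.cons x f : Fin 2 → A) 1 = f 0 := fun _ _ => rfl
  constructor
  · intro hab
    have star : ∀ a b v : A, op v (op a b) = op (op a v) b := by
      intro a b v
      have h := hab 2 (.mul (.mul (.var 1) (.var 0)) (.var 2)) e v
        ![e, op a b] ![a, b] ?_
      · simp only [GTerm.eval, c1, c2, Fin.cons_zero, Matrix.cons_val_zero,
          Matrix.cons_val_one, Matrix.head_cons] at h
        rwa [(he v).1] at h
      · simp only [GTerm.eval, c1, c2, Fin.cons_zero, Matrix.cons_val_zero,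
          Matrix.cons_val_one, Matrix.head_cons]
        rw [(he e).1, (he (op a b)).1, (he a).2]
    have star2 : ∀ a b v : A, op v (op a b) = op a (op v b) := by
      intro a b v
      have h := hab 2 (.mul (.var 1) (.mul (.var 0) (.var 2))) e v
        ![e, op a b] ![a, b] ?_
      · simp only [GTerm.eval, c1, c2, Fin.cons_zero, Matrix.cons_val_zero,
          Matrix.cons_val_one, Matrix.head_cons] at h
        rwa [(he _).1] at h
      · simp only [GTerm.eval, c1, c2, Fin.cons_zero, Matrix.cons_val_zero,
          Matrix.cons_val_one, Matrix.head_cons]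
        rw [(he _).1, (he _).1, (he b).1]
    have hcomm : ∀ a b : A, op a b = op b a := by
      intro a b
      have h := star a e b
      rw [(he a).2, (he (op a b)).2] at h
      exact h.symm
    have hassoc : ∀ a b c : A, op (op a b) c = op a (op b c) := by
      intro a v b
      rw [← star a b v, star2 a b v]
    refine ⟨hassoc, hcomm, fun a => ?_⟩
    have hinj : Function.Injective (fun b => op a b) := by
      intro x y hxy
      have h := hab 1 (.mul (.var 0) (.var 1)) a e ![x] ![y] ?_
      · simp only [GTerm.eval, b1, Fin.cons_zero, Matrix.cons_val_zero] at h
        rwa [(he x).1, (he y).1] at h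
      · simpa only [GTerm.eval, b1, Fin.cons_zero, Matrix.cons_val_zero] using hxy
    obtain ⟨b, hb⟩ := Finite.surjective_of_injective hinj e
    exact ⟨b, hb⟩
  · rintro ⟨hassoc, hcomm, hinv⟩
    intro n t u v c d h
    obtain ⟨k, g, hg⟩ := eval_decomp op e he hassoc hcomm t
    rw [hg, hg] at h ⊢
    obtain ⟨w, hw⟩ := hinv (gpow op e k u)
    have hcancel : g c = g d := by
      have h2 : op w (op (gpow op e k u) (g c)) = op w (op (gpow op e k u) (g d)) := by rw [h]
      rwa [← hassoc, ← hassoc, hcomm w, hw, (he _).1, (he _).1] at h2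
    rw [hcancel]
end

section
/- Every finite groupoid with an identity element that is an Abelian algebra is a Hamiltonian algebra. -/
universe u

/-- A groupoid `⟨A, op⟩` is a Hamiltonian algebra: every subalgebra (nonempty subset
closed under `op`) is an equivalence class of some congruence on `⟨A, op⟩`. -/
def IsHamiltonianGroupoid {A : Type u} (op : A → A → A) : Prop :=
  ∀ B : Set A, B.Nonempty → (∀ x ∈ B, ∀ y ∈ B, op x y ∈ B) →
    ∃ θ : A → A → Prop, Equivalence θ ∧
      (∀ a b c d : A, θ a b → θ c d → θ (op a c) (op b d)) ∧
      ∃ a : A, B = {x : A | θ x a}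

/-- A finite Abelian groupoid with an identity element is a Hamiltonian algebra. -/
theorem stmt_2 {A : Type u} [Finite A] (op : A → A → A) (e : A)
    (he : ∀ a : A, op e a = a ∧ op a e = a)
    (hab : IsAbelianGroupoid op) :
    IsHamiltonianGroupoid op := by
  have h2 : ∀ (u : A) (f : Fin 2 → A), (Fin.cons u f : Fin 3 → A) 2 = f 1 := fun u f => by
    have : (2 : Fin 3) = Fin.succ 1 := rfl
    rw [this, Fin.cons_succ]
  -- cancellation
  have cancel : ∀ a b c : A, op a b = op a c → b = c := by
    intro a b c h
    have := hab 1 (.mul (.var 0) (.var 1)) a e ![b] ![c] (by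
      simpa [GTerm.eval] using h)
    simpa [GTerm.eval, h2, he] using this
  -- associativity
  have assoc : ∀ a b c : A, op (op a b) c = op a (op b c) := by
    intro a b c
    have := hab 2 (.mul (.mul (.var 0) (.var 1)) (.var 2)) e a ![b, c] ![op b c, e] (by
      simp [GTerm.eval, h2, he, (he b).1])
    simpa [GTerm.eval, h2, he, (he (op b c)).1] using this
  -- commutativity
  have comm : ∀ a b : A, op a b = op b a := by
    intro a b
    have := hab 2 (.mul (.mul (.var 1) (.var 0)) (.var 2)) e a ![b, e] ![e, op b e] (by
      simp [GTerm.eval, h2, he, (he b).2])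
    simp [GTerm.eval, h2, he, (he b).2, (he a).1] at this
    exact this.symm
  intro B hBne hBcl
  -- multiplication by an element of B is surjective on B
  have surj : ∀ b ∈ B, ∀ y ∈ B, ∃ x ∈ B, op b x = y := by
    intro b hb y hy
    have hinj : Function.Injective (fun x : B => (⟨op b x, hBcl b hb x x.2⟩ : B)) := by
      intro x y hxy
      exact Subtype.ext (cancel b x y (congrArg Subtype.val hxy))
    have hsurj := Finite.surjective_of_injective hinj
    obtain ⟨x, hx⟩ := hsurj ⟨y, hy⟩
    exact ⟨x, x.2, congrArg Subtype.val hx⟩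
  -- e belongs to B
  have heB : e ∈ B := by
    obtain ⟨b, hb⟩ := hBne
    obtain ⟨x, hx, hbx⟩ := surj b hb b hb
    have : x = e := cancel b x e (by rw [hbx, (he b).2])
    rwa [this] at hx
  -- inverses in B
  have inv : ∀ b ∈ B, ∃ b' ∈ B, op b b' = e := fun b hb => surj b hb e heB
  refine ⟨fun x y => ∃ p ∈ B, op p y = x, ⟨?_, ?_, ?_⟩, ?_, e, ?_⟩
  · intro x; exact ⟨e, heB, (he x).1⟩
  · rintro x y ⟨p, hp, rfl⟩
    obtain ⟨q, hq, hpq⟩ := inv p hp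
    refine ⟨q, hq, ?_⟩
    rw [← assoc, comm q p, hpq, (he y).1]
  · rintro x y z ⟨p, hp, rfl⟩ ⟨q, hq, rfl⟩
    exact ⟨op p q, hBcl p hp q hq, assoc p q z⟩
  · rintro a b c d ⟨p, hp, rfl⟩ ⟨q, hq, rfl⟩
    refine ⟨op p q, hBcl p hp q hq, ?_⟩
    rw [assoc, assoc, ← assoc q b d, comm q b, assoc]
  · ext x
    simp only [Set.mem_setOf_eq]
    constructor
    · intro hx; exact ⟨x, hx, (he x).2⟩
    · rintro ⟨p, hp, rfl⟩; exact hBcl p hp e heB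
end

section
/- If a semigroup ⟨A,·⟩ is a Hamiltonian algebra, then for every a ∈ A there exist integers i,j with 1 ≤ i < j such that aⁱ = aʲ. -/
universe u

/-- `opPow op a n` is the power `a^(n+1)` of `a` with respect to the operation `op`. -/
def opPow {A : Type u} (op : A → A → A) (a : A) : ℕ → A
  | 0 => a
  | n + 1 => op a (opPow op a n)

/-- If a semigroup is a Hamiltonian algebra then for every `a` there are
exponents `1 ≤ i < j` with `a^i = a^j` (here `opPow op a n = a^(n+1)`). -/
theorem stmt_3 {A : Type u} (op : A → A → A)
    (hassoc : ∀ a b c : A, op (op a b) c = op a (op b c))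
    (hham : IsHamiltonianGroupoid op) :
    ∀ a : A, ∃ i j : ℕ, i < j ∧ opPow op a i = opPow op a j := by
  intro a
  by_contra hcon
  push_neg at hcon
  have hinj : Function.Injective (opPow op a) := by
    intro i j hij
    rcases lt_trichotomy i j with h' | h' | h'
    · exact absurd hij (hcon i j h')
    · exact h'
    · exact absurd hij.symm (hcon j i h')
  have key : ∀ m n : ℕ, op (opPow op a m) (opPow op a n) = opPow op a (m + n + 1) := by
    intro m
    induction m with
    | zero =>
        intro n
        rw [Nat.zero_add]
        rfl
    | succ k ih =>
        intro n
        show op (op a (opPow op a k)) (opPow op a n) = _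
        rw [hassoc, ih]
        show opPow op a ((k + n + 1) + 1) = opPow op a (k + 1 + n + 1)
        congr 1
        omega
  set B : Set A := opPow op a '' {n | n = 1 ∨ 3 ≤ n} with hB
  have hBne : B.Nonempty := ⟨opPow op a 1, ⟨1, Or.inl rfl, rfl⟩⟩
  have hBcl : ∀ x ∈ B, ∀ y ∈ B, op x y ∈ B := by
    rintro x ⟨m, hm, rfl⟩ y ⟨n, hn, rfl⟩
    rw [key]
    exact ⟨m + n + 1, Or.inr (by rcases hm with hm | hm <;> rcases hn with hn | hn <;> omega), rfl⟩
  obtain ⟨θ, heq, hcomp, c, hc⟩ := hham B hBne hBcl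
  have hmem : ∀ n : ℕ, (n = 1 ∨ 3 ≤ n) → θ (opPow op a n) c := by
    intro n hn
    have : opPow op a n ∈ B := ⟨n, hn, rfl⟩
    rwa [hc] at this
  have h13 : θ (opPow op a 1) (opPow op a 3) :=
    heq.trans (hmem 1 (Or.inl rfl)) (heq.symm (hmem 3 (Or.inr (by omega))))
  have h24 : θ (opPow op a 2) (opPow op a 4) :=
    hcomp a a (opPow op a 1) (opPow op a 3) (heq.refl a) h13
  have h2c : θ (opPow op a 2) c := heq.trans h24 (hmem 4 (Or.inr (by omega)))
  have h2B : opPow op a 2 ∈ B := by rw [hc]; exact h2c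
  obtain ⟨n, hn, he⟩ := h2B
  simp only [Set.mem_setOf_eq] at hn
  have h2 := hinj he
  omega
end

section
/- Let ⟨A,·⟩ be a groupoid with an identity element which is an Abelian algebra. Then ⟨A,·⟩ is a Hamiltonian algebra if and only if the operation · makes A a periodic Abelian group, i.e. a commutative group in which every element has finite order. -/
universe u

lemma opPow_add {A : Type u} {op : A → A → A}
    (assoc : ∀ a b c : A, op (op a b) c = op a (op b c)) (a : A) :
    ∀ m n : ℕ, opPow op a (m + n + 1) = op (opPow op a m) (opPow op a n)
  | 0, n => by simp [Nat.zero_add, opPow]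
  | m + 1, n => by
    have h : m + 1 + n + 1 = (m + n + 1) + 1 := by omega
    rw [h]
    show op a (opPow op a (m + n + 1)) = op (op a (opPow op a m)) (opPow op a n)
    rw [opPow_add assoc a m n, assoc]

/-- An Abelian groupoid with identity `e` is a Hamiltonian algebra iff its
operation makes it a periodic Abelian group (here `opPow op a n = a^(n+1)`). -/
theorem stmt_4 {A : Type u} (op : A → A → A) (e : A)
    (he : ∀ a : A, op e a = a ∧ op a e = a)
    (hab : IsAbelianGroupoid op) :
    IsHamiltonianGroupoid op ↔
      ((∀ a b c : A, op (op a b) c = op a (op b c)) ∧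
       (∀ a b : A, op a b = op b a) ∧
       (∀ a : A, ∃ b : A, op a b = e) ∧
       (∀ a : A, ∃ n : ℕ, opPow op a n = e)) := by
  have hel : ∀ a : A, op e a = a := fun a => (he a).1
  have her : ∀ a : A, op a e = a := fun a => (he a).2
  -- left cancellation
  have lcancel : ∀ u c d : A, op u c = op u d → c = d := by
    intro u c d h
    have H := hab 1 (.mul (.var 0) (.var 1)) u e ![c] ![d] (by
      show GTerm.eval op (.mul (.var 0) (.var 1)) ![u, c]
         = GTerm.eval op (.mul (.var 0) (.var 1)) ![u, d]
      simpa [GTerm.eval] using h)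
    have h2 : GTerm.eval op (.mul (.var 0) (.var 1)) ![e, c]
            = GTerm.eval op (.mul (.var 0) (.var 1)) ![e, d] := H
    simpa [GTerm.eval, hel] using h2
  -- commutativity
  have comm : ∀ a b : A, op a b = op b a := by
    intro a b
    have H := hab 2 (.mul (.mul (.var 1) (.var 0)) (.var 2)) e b ![a, e] ![e, a] (by
      show GTerm.eval op (.mul (.mul (.var 1) (.var 0)) (.var 2)) ![e, a, e]
         = GTerm.eval op (.mul (.mul (.var 1) (.var 0)) (.var 2)) ![e, e, a]
      simp [GTerm.eval, hel, her])
    have h2 : GTerm.eval op (.mul (.mul (.var 1) (.var 0)) (.var 2)) ![b, a, e]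
            = GTerm.eval op (.mul (.mul (.var 1) (.var 0)) (.var 2)) ![b, e, a] := H
    simpa [GTerm.eval, hel, her] using h2
  -- key identity: a·(v·b) = (a·b)·v
  have key : ∀ a b v : A, op a (op v b) = op (op a b) v := by
    intro a b v
    have H := hab 2 (.mul (.var 1) (.mul (.var 0) (.var 2))) e v ![a, b] ![op a b, e] (by
      show GTerm.eval op (.mul (.var 1) (.mul (.var 0) (.var 2))) ![e, a, b]
         = GTerm.eval op (.mul (.var 1) (.mul (.var 0) (.var 2))) ![e, op a b, e]
      simp [GTerm.eval, hel, her])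
    have h2 : GTerm.eval op (.mul (.var 1) (.mul (.var 0) (.var 2))) ![v, a, b]
            = GTerm.eval op (.mul (.var 1) (.mul (.var 0) (.var 2))) ![v, op a b, e] := H
    simpa [GTerm.eval, her] using h2
  have assoc : ∀ a b c : A, op (op a b) c = op a (op b c) := by
    intro a b c
    rw [← key a b c, comm c b]
  constructor
  · -- Hamiltonian → periodic abelian group
    intro ham
    have hper : ∀ a : A, ∃ n : ℕ, opPow op a n = e := by
      intro a
      by_contra hcon
      push_neg at hcon
      -- powers of a are pairwise distinct (as a function of the index)
      have hinj : ∀ i j : ℕ, opPow op a i = opPow op a j → i = j := by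
        have aux : ∀ i j : ℕ, i < j → opPow op a i ≠ opPow op a j := by
          intro i j hij hne
          obtain ⟨d, hd⟩ : ∃ d : ℕ, j = i + d + 1 := ⟨j - i - 1, by omega⟩
          have h1 : opPow op a j = op (opPow op a i) (opPow op a d) := by
            rw [hd, opPow_add assoc]
          have h2 : op (opPow op a i) e = op (opPow op a i) (opPow op a d) :=
            (her _).trans (hne.trans h1)
          exact hcon d (lcancel _ _ _ h2).symm
        intro i j h
        rcases lt_trichotomy i j with h' | h' | h'
        · exact absurd h (aux i j h')
        · exact h'
        · exact absurd h.symm (aux j i h')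
      -- the subalgebra {a^2} ∪ {a^k : k ≥ 4} (indices: {1} ∪ {n ≥ 3})
      set B : Set A := {x | ∃ n : ℕ, (n = 1 ∨ 3 ≤ n) ∧ x = opPow op a n} with hB
      have hBmem : ∀ n : ℕ, (n = 1 ∨ 3 ≤ n) → opPow op a n ∈ B := by
        intro n hn; exact ⟨n, hn, rfl⟩
      obtain ⟨θ, hEq, hCong, w, hw⟩ := ham B ⟨opPow op a 1, hBmem 1 (Or.inl rfl)⟩ (by
        rintro x ⟨m, hm, rfl⟩ y ⟨n, hn, rfl⟩
        rw [← opPow_add assoc]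
        exact hBmem (m + n + 1) (by omega))
      have hwmem : ∀ x, x ∈ B ↔ θ x w := by intro x; rw [hw]; rfl
      have h13 : θ (opPow op a 1) (opPow op a 3) :=
        hEq.trans ((hwmem _).1 (hBmem 1 (Or.inl rfl)))
          (hEq.symm ((hwmem _).1 (hBmem 3 (Or.inr (by omega)))))
      have h24 : θ (opPow op a 2) (opPow op a 4) := by
        have := hCong a a (opPow op a 1) (opPow op a 3) (hEq.refl a) h13
        exact this
      have h2B : opPow op a 2 ∈ B := by
        rw [hwmem]
        exact hEq.trans h24 ((hwmem _).1 (hBmem 4 (Or.inr (by omega))))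
      obtain ⟨n, hn, hx⟩ := h2B
      have := hinj 2 n hx
      omega
    refine ⟨assoc, comm, ?_, hper⟩
    intro a
    obtain ⟨n, hn⟩ := hper a
    cases n with
    | zero => exact ⟨e, by rw [show a = e from hn]; exact her e⟩
    | succ m => exact ⟨opPow op a m, hn⟩
  · -- periodic abelian group → Hamiltonian
    rintro ⟨assoc', comm', _, hper⟩ B hBne hBcl
    obtain ⟨a0, ha0⟩ := hBne
    -- B contains all powers of its elements, hence e, hence inverses
    have hpowB : ∀ x ∈ B, ∀ n : ℕ, opPow op x n ∈ B := by
      intro x hx n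
      induction n with
      | zero => exact hx
      | succ m ih => exact hBcl x hx _ ih
    have heB : e ∈ B := by
      obtain ⟨n, hn⟩ := hper a0
      rw [← hn]; exact hpowB a0 ha0 n
    have hinvB : ∀ x ∈ B, ∃ x' ∈ B, op x x' = e := by
      intro x hx
      obtain ⟨n, hn⟩ := hper x
      cases n with
      | zero => exact ⟨e, heB, by rw [show x = e from hn]; exact her e⟩
      | succ m => exact ⟨opPow op x m, hpowB x hx m, hn⟩
    refine ⟨fun x y => ∃ p ∈ B, ∃ q ∈ B, op x p = op y q, ⟨?_, ?_, ?_⟩, ?_, a0, ?_⟩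
    · intro x; exact ⟨e, heB, e, heB, rfl⟩
    · rintro x y ⟨p, hp, q, hq, h⟩; exact ⟨q, hq, p, hp, h.symm⟩
    · rintro x y z ⟨p, hp, q, hq, h1⟩ ⟨r, hr, s, hs, h2⟩
      refine ⟨op p r, hBcl p hp r hr, op s q, hBcl s hs q hq, ?_⟩
      calc op x (op p r) = op (op x p) r := (assoc' x p r).symm
        _ = op (op y q) r := by rw [h1]
        _ = op (op y r) q := by rw [assoc', assoc', comm' q r]
        _ = op (op z s) q := by rw [h2]
        _ = op z (op s q) := assoc' z s q
    · rintro x y c d ⟨p, hp, q, hq, h1⟩ ⟨r, hr, s, hs, h2⟩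
      refine ⟨op p r, hBcl p hp r hr, op q s, hBcl q hq s hs, ?_⟩
      have med : ∀ x₁ x₂ x₃ x₄ : A, op (op x₁ x₂) (op x₃ x₄) = op (op x₁ x₃) (op x₂ x₄) := by
        intro x₁ x₂ x₃ x₄
        rw [assoc', assoc', ← assoc' x₂ x₃ x₄, comm' x₂ x₃, assoc' x₃ x₂ x₄]
      rw [med, h1, h2, med]
    · ext x
      simp only [Set.mem_setOf_eq]
      constructor
      · intro hx
        exact ⟨a0, ha0, x, hx, comm' x a0⟩
      · rintro ⟨p, hp, q, hq, h⟩
        obtain ⟨p', hp', hpp'⟩ := hinvB p hp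
        have : x = op a0 (op q p') := by
          calc x = op x e := (her x).symm
            _ = op x (op p p') := by rw [hpp']
            _ = op (op x p) p' := (assoc' x p p').symm
            _ = op (op a0 q) p' := by rw [h]
            _ = op a0 (op q p') := assoc' a0 q p'
        rw [this]
        exact hBcl a0 ha0 _ (hBcl q hq p' hp')
end

section
/- Let ⟨A,·⟩ be a finite quasigroup and a ∈ A. Then ⟨A,·⟩ is an Abelian algebra if and only if (1) ⟨A,+⟩ is an Abelian group, and (2) the permutations r_a and l_a are automorphisms of ⟨A,+⟩. -/
universe u

/-- A groupoid `⟨A, op⟩` is a quasigroup: for all `a, b` the equations `x·a = b`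
and `a·y = b` have unique solutions. -/
def IsQuasigroup {A : Type u} (op : A → A → A) : Prop :=
  (∀ a b : A, ∃! x : A, op x a = b) ∧ (∀ a b : A, ∃! y : A, op a y = b)

def powR {A : Type u} {n : ℕ} (a : A) (b : GTerm A n) : ℕ → GTerm A n
  | 0 => b
  | k+1 => .mul (powR a b k) (.const a)

def powL {A : Type u} {n : ℕ} (a : A) (b : GTerm A n) : ℕ → GTerm A n
  | 0 => b
  | k+1 => .mul (.const a) (powL a b k)

def TaddT {A : Type u} {n : ℕ} (a : A) (m : ℕ) (s t : GTerm A n) : GTerm A n :=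
  .mul (powR a s m) (powL a t m)

def TnsT {A : Type u} {n : ℕ} (a : A) (m : ℕ) (z : A) (b : GTerm A n) : ℕ → GTerm A n
  | 0 => .const z
  | k+1 => TaddT a m (TnsT a m z b k) b

theorem eval_powR {A : Type u} (op : A → A → A) (a : A) {n} (b : GTerm A n) (k : ℕ) (v : Fin n → A) :
    (powR a b k).eval op v = (fun x => op x a)^[k] (b.eval op v) := by
  induction k with
  | zero => rfl
  | succ k ih => simp [powR, GTerm.eval, ih, Function.iterate_succ_apply']

theorem eval_powL {A : Type u} (op : A → A → A) (a : A) {n} (b : GTerm A n) (k : ℕ) (v : Fin n → A) :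
    (powL a b k).eval op v = (fun x => op a x)^[k] (b.eval op v) := by
  induction k with
  | zero => rfl
  | succ k ih => simp [powL, GTerm.eval, ih, Function.iterate_succ_apply']


theorem stmt_6_fwd {A : Type u} [Finite A] (op : A → A → A)
    (hq : IsQuasigroup op) (a : A)
    (Rinv Linv ra la : A → A)
    (hR : ∀ x : A, op (Rinv x) a = x) (hR' : ∀ x : A, Rinv (op x a) = x)
    (hL : ∀ x : A, op a (Linv x) = x) (hL' : ∀ x : A, Linv (op a x) = x)
    (add : A → A → A)
    (hadd : ∀ x y : A, add x y = op (Rinv x) (Linv y))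
    (hra : ∀ x : A, add (ra x) a = Rinv x)
    (hla : ∀ x : A, add (la x) a = Linv x)
    (hab : IsAbelianGroupoid op) :
      (((∀ x y z : A, add (add x y) z = add x (add y z)) ∧
        (∀ x y : A, add x y = add y x) ∧
        (∀ x : A, add (op a a) x = x ∧ add x (op a a) = x) ∧
        (∀ x : A, ∃ y : A, add x y = op a a)) ∧
       (Function.Bijective ra ∧ ∀ x y : A, ra (add x y) = add (ra x) (ra y)) ∧
       (Function.Bijective la ∧ ∀ x y : A, la (add x y) = add (la x) (la y))) := by
  -- loop identities
  have hz0l : ∀ x, add (op a a) x = x := by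
    intro x; rw [hadd, hR' a, hL]
  have hz0r : ∀ x, add x (op a a) = x := by
    intro x; rw [hadd, hL' a, hR]
  -- bijectivity facts
  have hRbij : Function.Bijective (fun x => op x a) :=
    Function.bijective_iff_has_inverse.2 ⟨Rinv, hR', hR⟩
  have hLbij : Function.Bijective (fun x => op a x) :=
    Function.bijective_iff_has_inverse.2 ⟨Linv, hL', hL⟩
  have hRinvbij : Function.Bijective Rinv :=
    Function.bijective_iff_has_inverse.2 ⟨fun x => op x a, hR, hR'⟩
  have hmulr : ∀ b : A, Function.Bijective (fun x => op x b) := by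
    intro b
    constructor
    · intro x y hxy; exact ((hq.1 b (op y b)).unique hxy rfl)
    · intro c; exact ⟨(hq.1 b c).exists.choose, (hq.1 b c).exists.choose_spec⟩
  have haddrbij : ∀ x : A, Function.Bijective (fun y => add y x) := by
    intro x
    have : (fun y => add y x) = (fun z => op z (Linv x)) ∘ Rinv := funext fun y => hadd y x
    rw [this]; exact (hmulr _).comp hRinvbij
  -- finiteness: uniform iteration exponent
  letI := Fintype.ofFinite A
  letI : DecidableEq A := Classical.decEq A
  set N := Fintype.card (Equiv.Perm A) with hNdef
  have hN1 : 1 ≤ N := Fintype.card_pos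
  have hNiter : ∀ f : A → A, Function.Bijective f → ∀ x, f^[N] x = x := by
    intro f hf x
    have hp : ∀ (e : Equiv.Perm A) (k : ℕ) (x : A), (e ^ k) x = (⇑e)^[k] x := by
      intro e k
      induction k with
      | zero => intro x; rfl
      | succ k ih => intro x; rw [pow_succ, Equiv.Perm.mul_apply, ih, Function.iterate_succ_apply]
    have h1 : ((Equiv.ofBijective f hf) ^ N) x = f^[N] x := hp _ N x
    rw [pow_card_eq_one] at h1
    exact h1.symm.trans rfl
  set mm := N - 1 with hmmdef
  have hmm : mm + 1 = N := Nat.succ_pred_eq_of_pos hN1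
  have hRm : ∀ x, (fun x => op x a)^[mm] x = Rinv x := by
    intro x
    apply hRbij.1
    show op _ a = op _ a
    rw [hR, ← Function.iterate_succ_apply' (fun x => op x a) mm x, Nat.succ_eq_add_one, hmm, hNiter _ hRbij]
  have hLm : ∀ x, (fun x => op a x)^[mm] x = Linv x := by
    intro x
    apply hLbij.1
    show op a _ = op a _
    rw [hL, ← Function.iterate_succ_apply' (fun x => op a x) mm x, Nat.succ_eq_add_one, hmm, hNiter _ hLbij]
  -- eval lemmas
  have evalAdd : ∀ {n : ℕ} (s t : GTerm A n) (v : Fin n → A),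
      (TaddT a mm s t).eval op v = add (s.eval op v) (t.eval op v) := by
    intro n s t v
    rw [TaddT]
    simp only [GTerm.eval]
    rw [eval_powR, eval_powL, hRm, hLm, ← hadd]
  -- nsm
  set nsm : ℕ → A → A := fun k x => (fun y => add y x)^[k] (op a a) with hnsmdef
  have hns0 : ∀ x, nsm 0 x = op a a := fun _ => rfl
  have hnss : ∀ k x, nsm (k+1) x = add (nsm k x) x := by
    intro k x; show (fun y => add y x)^[k+1] (op a a) = _
    rw [Function.iterate_succ_apply']
  have evalNs : ∀ {n : ℕ} (k : ℕ) (b : GTerm A n) (v : Fin n → A),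
      (TnsT a mm (op a a) b k).eval op v = nsm k (b.eval op v) := by
    intro n k b v
    induction k with
    | zero => simp only [TnsT, GTerm.eval, hns0]
    | succ k ih => rw [TnsT, evalAdd, ih, hnss]
  have hnsN : ∀ x, nsm N x = op a a := fun x => hNiter _ (haddrbij x) _
  -- associativity via TC
  have hassoc : ∀ x y z, add (add x y) z = add x (add y z) := by
    intro x y z
    have h := hab 2 (TaddT a mm (TaddT a mm (.var 0) (.var 1)) (.var 2)) (op a a) x
      ![y, z] ![add y z, op a a] ?_
    · simp only [evalAdd] at h
      simp only [GTerm.eval] at h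
      simp only [show ∀ (u p q : A), (Fin.cons u ![p, q] : Fin 3 → A) 0 = u from fun _ _ _ => rfl,
        show ∀ (u p q : A), (Fin.cons u ![p, q] : Fin 3 → A) 1 = p from fun _ _ _ => rfl,
        show ∀ (u p q : A), (Fin.cons u ![p, q] : Fin 3 → A) 2 = q from fun _ _ _ => rfl] at h
      rw [h, hz0r]
    · simp only [evalAdd, GTerm.eval]
      simp only [show ∀ (u p q : A), (Fin.cons u ![p, q] : Fin 3 → A) 0 = u from fun _ _ _ => rfl,
        show ∀ (u p q : A), (Fin.cons u ![p, q] : Fin 3 → A) 1 = p from fun _ _ _ => rfl,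
        show ∀ (u p q : A), (Fin.cons u ![p, q] : Fin 3 → A) 2 = q from fun _ _ _ => rfl]
      rw [hz0l, hz0l, hz0r]
  -- inverses
  have hxx : ∀ (k : ℕ) (x : A), add x (nsm k x) = nsm (k+1) x := by
    intro k
    induction k with
    | zero => intro x; rw [hns0, hz0r, hnss, hns0, hz0l]
    | succ k ih => intro x; rw [hnss, ← hassoc, ih, ← hnss]
  have hnegr : ∀ x, add x (nsm mm x) = op a a := by
    intro x; rw [hxx, hmm, hnsN]
  have hnegl : ∀ x, add (nsm mm x) x = op a a := by
    intro x; rw [← hnss, hmm, hnsN]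
  have hnsz : ∀ k, nsm k (op a a) = op a a := by
    intro k; induction k with
    | zero => rfl
    | succ k ih => rw [hnss, ih, hz0r]
  -- commutativity via TC
  have hcomm : ∀ x y, add x y = add y x := by
    intro x y
    have h := hab 1 (TaddT a mm (TaddT a mm (.var 1) (.var 0)) (TnsT a mm (op a a) (.var 1) mm))
      (op a a) x (fun _ => y) (fun _ => op a a) ?_
    · simp only [evalAdd, evalNs, GTerm.eval] at h
      simp only [show ∀ (u p : A), (Fin.cons u (fun _ => p) : Fin 2 → A) 0 = u from fun _ _ => rfl,
        show ∀ (u p : A), (Fin.cons u (fun _ => p) : Fin 2 → A) 1 = p from fun _ _ => rfl] at h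
      rw [hz0l, hnsz, hz0r] at h
      calc add x y = add (add (add y x) (nsm mm y)) y := by rw [h]
        _ = add (add y x) (add (nsm mm y) y) := hassoc _ _ _
        _ = add y x := by rw [hnegl, hz0r]
    · simp only [evalAdd, evalNs, GTerm.eval]
      simp only [show ∀ (u p : A), (Fin.cons u (fun _ => p) : Fin 2 → A) 0 = u from fun _ _ => rfl,
        show ∀ (u p : A), (Fin.cons u (fun _ => p) : Fin 2 → A) 1 = p from fun _ _ => rfl]
      rw [hz0r, hz0r, hnegr, hnegr]
  -- group structure
  letI : Add A := ⟨add⟩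
  letI : Zero A := ⟨op a a⟩
  letI : Neg A := ⟨fun x => nsm mm x⟩
  letI : AddCommGroup A :=
    { add_assoc := hassoc, zero_add := hz0l, add_zero := hz0r,
      neg_add_cancel := hnegl, add_comm := hcomm, nsmul := nsmulRec, zsmul := zsmulRec }
  -- Rinv affine via TC
  have hRz : Rinv (op a a) = a := hR' a
  have hLz : Linv (op a a) = a := hL' a
  have evalRinv : ∀ {n : ℕ} (s : GTerm A n) (v : Fin n → A),
      (powR a s mm).eval op v = Rinv (s.eval op v) := by
    intro n s v; rw [eval_powR, hRm]
  have evalLinv : ∀ {n : ℕ} (s : GTerm A n) (v : Fin n → A),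
      (powL a s mm).eval op v = Linv (s.eval op v) := by
    intro n s v; rw [eval_powL, hLm]
  have hRaff : ∀ x y : A, Rinv (x + y) = Rinv x - a + Rinv y := by
    intro x y
    have h := hab 1 (TaddT a mm (powR a (TaddT a mm (.var 0) (.var 1)) mm)
        (TnsT a mm (op a a) (powR a (.var 1) mm) mm))
      (op a a) x (fun _ => y) (fun _ => op a a) ?_
    · simp only [evalAdd, evalNs, evalRinv, GTerm.eval] at h
      simp only [show ∀ (u p : A), (Fin.cons u (fun _ => p) : Fin 2 → A) 0 = u from fun _ _ => rfl,
        show ∀ (u p : A), (Fin.cons u (fun _ => p) : Fin 2 → A) 1 = p from fun _ _ => rfl] at h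
      have h' : Rinv (x + y) + -(Rinv y) = Rinv x + -a := by
        have e1 : add x (op a a) = x := hz0r x
        rw [e1, hRz] at h
        exact h
      calc Rinv (x + y) = (Rinv (x + y) + -(Rinv y)) + Rinv y := by abel
        _ = (Rinv x + -a) + Rinv y := by rw [h']
        _ = Rinv x - a + Rinv y := by abel
    · simp only [evalAdd, evalNs, evalRinv, GTerm.eval]
      simp only [show ∀ (u p : A), (Fin.cons u (fun _ => p) : Fin 2 → A) 0 = u from fun _ _ => rfl,
        show ∀ (u p : A), (Fin.cons u (fun _ => p) : Fin 2 → A) 1 = p from fun _ _ => rfl]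
      rw [hz0l, hz0l, hnegr, hnegr]
  have hLaff : ∀ x y : A, Linv (x + y) = Linv x - a + Linv y := by
    intro x y
    have h := hab 1 (TaddT a mm (powL a (TaddT a mm (.var 0) (.var 1)) mm)
        (TnsT a mm (op a a) (powL a (.var 1) mm) mm))
      (op a a) x (fun _ => y) (fun _ => op a a) ?_
    · simp only [evalAdd, evalNs, evalLinv, GTerm.eval] at h
      simp only [show ∀ (u p : A), (Fin.cons u (fun _ => p) : Fin 2 → A) 0 = u from fun _ _ => rfl,
        show ∀ (u p : A), (Fin.cons u (fun _ => p) : Fin 2 → A) 1 = p from fun _ _ => rfl] at h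
      have h' : Linv (x + y) + -(Linv y) = Linv x + -a := by
        have e1 : add x (op a a) = x := hz0r x
        rw [e1, hLz] at h
        exact h
      calc Linv (x + y) = (Linv (x + y) + -(Linv y)) + Linv y := by abel
        _ = (Linv x + -a) + Linv y := by rw [h']
        _ = Linv x - a + Linv y := by abel
    · simp only [evalAdd, evalNs, evalLinv, GTerm.eval]
      simp only [show ∀ (u p : A), (Fin.cons u (fun _ => p) : Fin 2 → A) 0 = u from fun _ _ => rfl,
        show ∀ (u p : A), (Fin.cons u (fun _ => p) : Fin 2 → A) 1 = p from fun _ _ => rfl]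
      rw [hz0l, hz0l, hnegr, hnegr]
  -- ra, la
  have hra' : ∀ x, ra x = Rinv x - a := by
    intro x; exact eq_sub_of_add_eq (hra x)
  have hla' : ∀ x, la x = Linv x - a := by
    intro x; exact eq_sub_of_add_eq (hla x)
  have hrainj : Function.Injective ra := by
    intro x y h
    have h2 : Rinv x = Rinv y := by rw [← hra x, ← hra y, h]
    calc x = op (Rinv x) a := (hR x).symm
      _ = op (Rinv y) a := by rw [h2]
      _ = y := hR y
  have hlainj : Function.Injective la := by
    intro x y h
    have h2 : Linv x = Linv y := by rw [← hla x, ← hla y, h]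
    calc x = op a (Linv x) := (hL x).symm
      _ = op a (Linv y) := by rw [h2]
      _ = y := hL y
  refine ⟨⟨hassoc, hcomm, fun x => ⟨hz0l x, hz0r x⟩, fun x => ⟨nsm mm x, hnegr x⟩⟩,
    ⟨Finite.injective_iff_bijective.1 hrainj, ?_⟩,
    ⟨Finite.injective_iff_bijective.1 hlainj, ?_⟩⟩
  · intro x y
    show ra (x + y) = ra x + ra y
    rw [hra', hra', hra', hRaff]; abel
  · intro x y
    show la (x + y) = la x + la y
    rw [hla', hla', hla', hLaff]; abel

theorem affine_key {A : Type u} [AddCommGroup A] (op : A → A → A) (fr fl : A → A) (e : A)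
    (hfr : ∀ x y : A, fr (x - y) = fr x - fr y) (hfl : ∀ x y : A, fl (x - y) = fl x - fl y)
    (hop : ∀ x y : A, op x y = fr x + fl y + e) :
    ∀ {n : ℕ} (t : GTerm A n) (v w v' w' : Fin n → A),
      (∀ i, v i - w i = v' i - w' i) →
      t.eval op v - t.eval op w = t.eval op v' - t.eval op w' := by
  intro n t
  induction t with
  | var i => intro v w v' w' h; simpa only [GTerm.eval] using h i
  | const c => intro v w v' w' h; simp [GTerm.eval]
  | mul s t hs ht =>
    intro v w v' w' h
    have h1 := hs v w v' w' h
    have h2 := ht v w v' w' h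
    have key : ∀ P Q R S : A, (fr P + fl Q + e) - (fr R + fl S + e) = fr (P - R) + fl (Q - S) := by
      intro P Q R S; rw [hfr, hfl]; abel
    simp only [GTerm.eval, hop, key, h1, h2]

theorem stmt_6_rev {A : Type u} [Finite A] (op : A → A → A)
    (hq : IsQuasigroup op) (a : A)
    (Rinv Linv ra la : A → A)
    (hR : ∀ x : A, op (Rinv x) a = x) (hR' : ∀ x : A, Rinv (op x a) = x)
    (hL : ∀ x : A, op a (Linv x) = x) (hL' : ∀ x : A, Linv (op a x) = x)
    (add : A → A → A)
    (hadd : ∀ x y : A, add x y = op (Rinv x) (Linv y))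
    (hra : ∀ x : A, add (ra x) a = Rinv x)
    (hla : ∀ x : A, add (la x) a = Linv x)
    (H : ((∀ x y z : A, add (add x y) z = add x (add y z)) ∧
        (∀ x y : A, add x y = add y x) ∧
        (∀ x : A, add (op a a) x = x ∧ add x (op a a) = x) ∧
        (∀ x : A, ∃ y : A, add x y = op a a)) ∧
       (Function.Bijective ra ∧ ∀ x y : A, ra (add x y) = add (ra x) (ra y)) ∧
       (Function.Bijective la ∧ ∀ x y : A, la (add x y) = add (la x) (la y))) :
    IsAbelianGroupoid op := by
  obtain ⟨⟨h1, h2, h3, h4⟩, ⟨-, hradd⟩, ⟨-, hladd⟩⟩ := H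
  letI : Add A := ⟨add⟩
  letI : Zero A := ⟨op a a⟩
  letI : Neg A := ⟨fun x => Classical.choose (h4 x)⟩
  have hnegr : ∀ x : A, add x (Classical.choose (h4 x)) = op a a :=
    fun x => Classical.choose_spec (h4 x)
  letI : AddCommGroup A :=
    { add_assoc := h1, zero_add := fun x => (h3 x).1, add_zero := fun x => (h3 x).2,
      neg_add_cancel := fun x => (h2 _ _).trans (hnegr x),
      add_comm := h2, nsmul := nsmulRec, zsmul := zsmulRec }
  have hz : (0 : A) = op a a := rfl
  have hRz : Rinv (0 : A) = a := hR' a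
  have hLz : Linv (0 : A) = a := hL' a
  have hra' : ∀ x, ra x = Rinv x - a := fun x => eq_sub_of_add_eq (hra x)
  have hla' : ∀ x, la x = Linv x - a := fun x => eq_sub_of_add_eq (hla x)
  have hRinvAff : ∀ x y : A, Rinv (x + y) = Rinv x + Rinv y - a := by
    intro x y
    have h : ra (x + y) = ra x + ra y := hradd x y
    rw [hra', hra', hra'] at h
    calc Rinv (x + y) = (Rinv (x + y) - a) + a := by abel
      _ = ((Rinv x - a) + (Rinv y - a)) + a := by rw [h]
      _ = Rinv x + Rinv y - a := by abel
  have hLinvAff : ∀ x y : A, Linv (x + y) = Linv x + Linv y - a := by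
    intro x y
    have h : la (x + y) = la x + la y := hladd x y
    rw [hla', hla', hla'] at h
    calc Linv (x + y) = (Linv (x + y) - a) + a := by abel
      _ = ((Linv x - a) + (Linv y - a)) + a := by rw [h]
      _ = Linv x + Linv y - a := by abel
  have hRinvNeg : ∀ u : A, Rinv (-u) = a + a - Rinv u := by
    intro u
    have h := hRinvAff u (-u)
    rw [add_neg_cancel, hRz] at h
    calc Rinv (-u) = (Rinv u + Rinv (-u) - a) + (a + a) - Rinv u - a := by abel
      _ = a + (a + a) - Rinv u - a := by rw [← h]
      _ = a + a - Rinv u := by abel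
  have hLinvNeg : ∀ u : A, Linv (-u) = a + a - Linv u := by
    intro u
    have h := hLinvAff u (-u)
    rw [add_neg_cancel, hLz] at h
    calc Linv (-u) = (Linv u + Linv (-u) - a) + (a + a) - Linv u - a := by abel
      _ = a + (a + a) - Linv u - a := by rw [← h]
      _ = a + a - Linv u := by abel
  have hRinj : Function.Injective Rinv := by
    intro u v h
    rw [← hR u, ← hR v, h]
  have hLinj : Function.Injective Linv := by
    intro u v h
    rw [← hL u, ← hL v, h]
  have hRAff : ∀ x y : A, op (x + y) a = op x a + op y a - op 0 a := by
    intro x y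
    apply hRinj
    rw [hR']
    rw [sub_eq_add_neg, hRinvAff, hRinvAff, hRinvNeg]
    simp only [hR']
    abel
  have hLAff : ∀ x y : A, op a (x + y) = op a x + op a y - op a 0 := by
    intro x y
    apply hLinj
    rw [hL']
    rw [sub_eq_add_neg, hLinvAff, hLinvAff, hLinvNeg]
    simp only [hL']
    abel
  -- affine decomposition of op
  have hop' : ∀ x y : A, op x y = op x a + op a y := by
    intro x y
    have h := hadd (op x a) (op a y)
    rw [hR', hL'] at h
    exact h.symm
  have frA : ∀ x y : A, (op (x + y) a - op 0 a) = (op x a - op 0 a) + (op y a - op 0 a) := by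
    intro x y; rw [hRAff]; abel
  have flA : ∀ x y : A, (op a (x + y) - op a 0) = (op a x - op a 0) + (op a y - op a 0) := by
    intro x y; rw [hLAff]; abel
  have frS : ∀ x y : A, (op (x - y) a - op 0 a) = (op x a - op 0 a) - (op y a - op 0 a) := by
    intro x y
    have h := frA (x - y) y
    rw [sub_add_cancel] at h
    rw [h]; abel
  have flS : ∀ x y : A, (op a (x - y) - op a 0) = (op a x - op a 0) - (op a y - op a 0) := by
    intro x y
    have h := flA (x - y) y
    rw [sub_add_cancel] at h
    rw [h]; abel
  have hop : ∀ x y : A, op x y = (op x a - op 0 a) + (op a y - op a 0) + (op 0 a + op a 0) := by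
    intro x y
    rw [hop' x y]; abel
  intro n t u v c d h
  have key := affine_key op (fun x => op x a - op 0 a) (fun y => op a y - op a 0)
    (op 0 a + op a 0) frS flS hop t (Fin.cons v c) (Fin.cons v d) (Fin.cons u c) (Fin.cons u d) ?_
  · rw [h, sub_self] at key
    exact sub_eq_zero.mp key
  · intro i
    refine Fin.cases ?_ ?_ i
    · simp
    · intro j; simp

/-- For a finite quasigroup `⟨A,·⟩` and `a ∈ A`, with `R_a⁻¹`, `L_a⁻¹` the inverses
of `R_a(x) = x·a`, `L_a(x) = a·x`, the operation `x + y = R_a⁻¹(x)·L_a⁻¹(y)`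
(a loop with identity `0 = a·a`), and `r_a`, `l_a` defined by `r_a(x) + a = R_a⁻¹(x)`,
`l_a(x) + a = L_a⁻¹(x)`: the quasigroup is an Abelian algebra iff `⟨A,+⟩` is an
Abelian group and `r_a`, `l_a` are automorphisms of `⟨A,+⟩`. -/
theorem stmt_6 {A : Type u} [Finite A] (op : A → A → A)
    (hq : IsQuasigroup op) (a : A)
    (Rinv Linv ra la : A → A)
    (hR : ∀ x : A, op (Rinv x) a = x) (hR' : ∀ x : A, Rinv (op x a) = x)
    (hL : ∀ x : A, op a (Linv x) = x) (hL' : ∀ x : A, Linv (op a x) = x)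
    (add : A → A → A)
    (hadd : ∀ x y : A, add x y = op (Rinv x) (Linv y))
    (hra : ∀ x : A, add (ra x) a = Rinv x)
    (hla : ∀ x : A, add (la x) a = Linv x) :
    IsAbelianGroupoid op ↔
      (((∀ x y z : A, add (add x y) z = add x (add y z)) ∧
        (∀ x y : A, add x y = add y x) ∧
        (∀ x : A, add (op a a) x = x ∧ add x (op a a) = x) ∧
        (∀ x : A, ∃ y : A, add x y = op a a)) ∧
       (Function.Bijective ra ∧ ∀ x y : A, ra (add x y) = add (ra x) (ra y)) ∧
       (Function.Bijective la ∧ ∀ x y : A, la (add x y) = add (la x) (la y))) :=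
  Iff.intro
    (stmt_6_fwd op hq a Rinv Linv ra la hR hR' hL hL' add hadd hra hla)
    (stmt_6_rev op hq a Rinv Linv ra la hR hR' hL hL' add hadd hra hla)
end

section
/- Let ⟨A,·⟩ be a quasigroup which is an Abelian algebra. Then for any a,b ∈ A such that the sets {x ∈ A : x·x = a} and {x ∈ A : x·x = b} are both nonempty, these two sets have the same cardinality. -/
universe u

private lemma sq_key {A : Type u} (op : A → A → A) (hab : IsAbelianGroupoid op)
    (u v s e : A) (h : op (op u s) (op u s) = op (op u e) (op u e)) :
    op (op v s) (op v s) = op (op v e) (op v e) := by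
  have := hab 1 (.mul (.mul (.var 0) (.var 1)) (.mul (.var 0) (.var 1))) u v
    (fun _ => s) (fun _ => e)
  simp only [GTerm.eval, Fin.cons_zero, Fin.cons_one] at this
  exact this h

/-- In an Abelian quasigroup, any two nonempty sets of square roots
`{x : x·x = a}` and `{x : x·x = b}` have the same cardinality. -/
theorem stmt_7 {A : Type u} (op : A → A → A)
    (hq : IsQuasigroup op) (hab : IsAbelianGroupoid op) (a b : A)
    (ha : {x : A | op x x = a}.Nonempty) (hb : {x : A | op x x = b}.Nonempty) :
    Nonempty ({x : A // op x x = a} ≃ {x : A // op x x = b}) := by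
  classical
  obtain ⟨p, hp⟩ := ha
  obtain ⟨q, hq0⟩ := hb
  simp only [Set.mem_setOf_eq] at hp hq0
  obtain ⟨e, he, _⟩ := hq.2 p p
  obtain ⟨r, hr, _⟩ := hq.1 e q
  -- divisions
  have ldiv : ∀ z x : A, op z (hq.2 z x).choose = x := fun z x => ((hq.2 z x).choose_spec).1
  have luniq : ∀ z t x : A, op z t = x → (hq.2 z x).choose = t := by
    intro z t x h
    exact ((hq.2 z x).choose_spec).2 t h ▸ rfl
  refine ⟨{
      toFun := fun x => ⟨op r (hq.2 p x.1).choose, ?_⟩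
      invFun := fun y => ⟨op p (hq.2 r y.1).choose, ?_⟩
      left_inv := ?_
      right_inv := ?_ }⟩
  · set s := (hq.2 p x.1).choose with hs
    have hps : op p s = x.1 := ldiv p x.1
    have h1 : op (op p s) (op p s) = op (op p e) (op p e) := by
      rw [hps, he, x.2, hp]
    have h2 := sq_key op hab p r s e h1
    rw [h2, hr, hq0]
  · set s := (hq.2 r y.1).choose with hs
    have hrs : op r s = y.1 := ldiv r y.1
    have h1 : op (op r s) (op r s) = op (op r e) (op r e) := by
      rw [hrs, hr, y.2, hq0]
    have h2 := sq_key op hab r p s e h1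
    rw [h2, he, hp]
  · intro x
    apply Subtype.ext
    show op p (hq.2 r (op r (hq.2 p x.1).choose)).choose = x.1
    rw [luniq r (hq.2 p x.1).choose _ rfl, ldiv]
  · intro y
    apply Subtype.ext
    show op r (hq.2 p (op p (hq.2 r y.1).choose)).choose = y.1
    rw [luniq p (hq.2 r y.1).choose _ rfl, ldiv]
end

section
/- Every finite quasigroup that is an Abelian algebra is a Hamiltonian algebra. -/
universe u

namespace Stmt8Aux

variable {A : Type u}

@[simp] theorem eval_var (op : A → A → A) {n} (i : Fin n) (v : Fin n → A) :
    GTerm.eval op (GTerm.var i) v = v i := by simp [GTerm.eval]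
@[simp] theorem eval_const (op : A → A → A) {n} (a : A) (v : Fin n → A) :
    GTerm.eval op (GTerm.const a) v = a := by simp [GTerm.eval]
@[simp] theorem eval_mul (op : A → A → A) {n} (s t : GTerm A n) (v : Fin n → A) :
    GTerm.eval op (GTerm.mul s t) v = op (GTerm.eval op s v) (GTerm.eval op t v) := by
  simp [GTerm.eval]

/-- Renaming of variables in a term. -/
def rename {n m : ℕ} (f : Fin n → Fin m) : GTerm A n → GTerm A m
  | .var i => .var (f i)
  | .const a => .const a
  | .mul s t => .mul (rename f s) (rename f t)

theorem eval_rename (op : A → A → A) {n m : ℕ} (f : Fin n → Fin m)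
    (t : GTerm A n) (v : Fin m → A) :
    (rename f t).eval op v = t.eval op (v ∘ f) := by
  induction t with
  | var i => simp [rename]
  | const a => simp [rename]
  | mul s t ihs iht => simp [rename, ihs, iht]

/-- Iterated left translation (`k`-fold application of `op a`). -/
def ldf (op : A → A → A) (k : ℕ) (a b : A) : A := (op a)^[k] b
/-- Iterated right translation. -/
def rdf (op : A → A → A) (k : ℕ) (a b : A) : A := (fun x => op x b)^[k] a
/-- A Mal'cev-style polynomial built from iterated translations. -/
def pf (op : A → A → A) (k : ℕ) (x y z : A) : A :=
  op (rdf op k x (ldf op k y y)) (ldf op k y z)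

def ldT (k : ℕ) {n : ℕ} (s t : GTerm A n) : GTerm A n := (GTerm.mul s)^[k] t
def rdT (k : ℕ) {n : ℕ} (s t : GTerm A n) : GTerm A n := (fun u => GTerm.mul u t)^[k] s
def pT (k : ℕ) {n : ℕ} (s t u : GTerm A n) : GTerm A n :=
  GTerm.mul (rdT k s (ldT k t t)) (ldT k t u)

@[simp] theorem eval_ldT (op : A → A → A) (k : ℕ) {n : ℕ} (s t : GTerm A n) (v : Fin n → A) :
    (ldT k s t).eval op v = ldf op k (s.eval op v) (t.eval op v) := by
  induction k with
  | zero => rfl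
  | succ k ih =>
      rw [ldT, Function.iterate_succ_apply', ldf, Function.iterate_succ_apply',
        eval_mul, show (GTerm.mul s)^[k] t = ldT k s t from rfl, ih, ldf]

@[simp] theorem eval_rdT (op : A → A → A) (k : ℕ) {n : ℕ} (s t : GTerm A n) (v : Fin n → A) :
    (rdT k s t).eval op v = rdf op k (s.eval op v) (t.eval op v) := by
  induction k with
  | zero => rfl
  | succ k ih =>
      rw [rdT, Function.iterate_succ_apply', rdf, Function.iterate_succ_apply',
        eval_mul, show (fun u => GTerm.mul u t)^[k] s = rdT k s t from rfl, ih, rdf]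

@[simp] theorem eval_pT (op : A → A → A) (k : ℕ) {n : ℕ} (s t u : GTerm A n) (v : Fin n → A) :
    (pT k s t u).eval op v = pf op k (s.eval op v) (t.eval op v) (u.eval op v) := by
  rw [pT, eval_mul, eval_rdT, eval_ldT, eval_ldT, pf]

end Stmt8Aux

open Stmt8Aux in
/-- Every finite Abelian quasigroup is a Hamiltonian algebra. -/
theorem stmt_8 {A : Type u} [Finite A] (op : A → A → A)
    (hq : IsQuasigroup op) (hab : IsAbelianGroupoid op) :
    IsHamiltonianGroupoid op := by
  classical
  obtain ⟨hq1, hq2⟩ := hq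
  have linj : ∀ a : A, Function.Injective (op a) := by
    intro a x y h
    obtain ⟨w, -, hu⟩ := hq2 a (op a y)
    exact (hu x h).trans (hu y rfl).symm
  have rinj : ∀ c : A, Function.Injective (fun x => op x c) := by
    intro c x y h
    obtain ⟨w, -, hu⟩ := hq1 c (op y c)
    exact (hu x h).trans (hu y rfl).symm
  haveI : Fintype A := Fintype.ofFinite A
  set N := Fintype.card (Equiv.Perm A) with hNdef
  have hNpos : 0 < N := Fintype.card_pos
  have hiterL : ∀ a b : A, (op a)^[N] b = b := by
    intro a b
    have hb : Function.Bijective (op a) := ⟨linj a, fun y => (hq2 a y).exists⟩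
    have h1 : (Equiv.ofBijective _ hb) ^ N = 1 := pow_card_eq_one
    have h2 : (⇑(Equiv.ofBijective _ hb))^[N] b = b := by
      rw [Equiv.Perm.iterate_eq_pow, h1]; rfl
    exact h2
  have hiterR : ∀ c b : A, (fun x => op x c)^[N] b = b := by
    intro c b
    have hb : Function.Bijective (fun x => op x c) := ⟨rinj c, fun y => (hq1 c y).exists⟩
    have h1 : (Equiv.ofBijective _ hb) ^ N = 1 := pow_card_eq_one
    have h2 : (⇑(Equiv.ofBijective _ hb))^[N] b = b := by
      rw [Equiv.Perm.iterate_eq_pow, h1]; rfl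
    exact h2
  obtain ⟨k, hk⟩ : ∃ k, N = k + 1 := ⟨N - 1, (Nat.succ_pred_eq_of_pos hNpos).symm⟩
  have HL : ∀ a b : A, op a (ldf op k a b) = b := by
    intro a b
    have h := hiterL a b
    rwa [hk, Function.iterate_succ_apply'] at h
  have HR : ∀ a b : A, op (rdf op k a b) b = a := by
    intro a b
    have h := hiterR b a
    rwa [hk, Function.iterate_succ_apply'] at h
  have P1 : ∀ x y : A, pf op k x y y = x := fun x y => HR x (ldf op k y y)
  have P2 : ∀ x y : A, pf op k x x y = y := by
    intro x y
    have h1 : rdf op k x (ldf op k x x) = x := by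
      have h2 := HR x (ldf op k x x)
      have h3 := HL x x
      exact rinj (ldf op k x x) (h2.trans h3.symm)
    show op (rdf op k x (ldf op k x x)) (ldf op k x y) = y
    rw [h1, HL]
  have Pinj : ∀ {x x' : A} (y z : A), pf op k x y z = pf op k x' y z → x = x' := by
    intro x x' y z h
    have h1 : rdf op k x (ldf op k y y) = rdf op k x' (ldf op k y y) :=
      rinj (ldf op k y z) h
    calc x = op (rdf op k x (ldf op k y y)) (ldf op k y y) := (HR _ _).symm
      _ = op (rdf op k x' (ldf op k y y)) (ldf op k y y) := by rw [h1]
      _ = x' := HR _ _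
  -- the Hamiltonian property
  intro B hBne hBcl
  obtain ⟨e, he⟩ := hBne
  -- closure of B under the derived operations
  have BiterL : ∀ (j : ℕ) (a b : A), a ∈ B → b ∈ B → (op a)^[j] b ∈ B := by
    intro j
    induction j with
    | zero => intro a b _ hb; simpa using hb
    | succ j ih =>
        intro a b ha hb
        rw [Function.iterate_succ_apply']
        exact hBcl a ha _ (ih a b ha hb)
  have BiterR : ∀ (j : ℕ) (a b : A), a ∈ B → b ∈ B → (fun x => op x b)^[j] a ∈ B := by
    intro j
    induction j with
    | zero => intro a b ha _; simpa using ha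
    | succ j ih =>
        intro a b ha hb
        rw [Function.iterate_succ_apply']
        exact hBcl _ (ih a b ha hb) b hb
  have Bp : ∀ {x y z : A}, x ∈ B → y ∈ B → z ∈ B → pf op k x y z ∈ B := by
    intro x y z hx hy hz
    exact hBcl _ (BiterR k _ _ hx (BiterL k _ _ hy hy)) _ (BiterL k _ _ hy hz)
  -- evaluation of `Fin.cons` assignments
  have c0 : ∀ (u a b : A), (Fin.cons u ![a, b] : Fin 3 → A) 0 = u := fun _ _ _ => rfl
  have c1 : ∀ (u a b : A), (Fin.cons u ![a, b] : Fin 3 → A) 1 = a := fun _ _ _ => rfl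
  have c2 : ∀ (u a b : A), (Fin.cons u ![a, b] : Fin 3 → A) 2 = b := fun _ _ _ => rfl
  have d0 : ∀ (u a : A), (Fin.cons u ![a] : Fin 2 → A) 0 = u := fun _ _ => rfl
  have d1 : ∀ (u a : A), (Fin.cons u ![a] : Fin 2 → A) 1 = a := fun _ _ => rfl
  -- identities derived from the term condition (Abelianness)
  have I1 : ∀ x y z w : A, pf op k (pf op k x y z) z w = pf op k x y w := by
    intro x y z w
    have h := hab 2 (pT k (pT k (.var 0) (.const y) (.var 1)) (.var 1) (.var 2))
      y x ![z, w] ![w, w] ?_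
    · simp only [eval_pT, eval_var, eval_const, c0, c1, c2] at h
      rwa [P1] at h
    · simp only [eval_pT, eval_var, eval_const, c0, c1, c2, P1, P2]
  have I2 : ∀ x y z : A, pf op k (pf op k x y z) z y = x := by
    intro x y z; rw [I1, P1]
  have DL : ∀ x y z z' : A,
      pf op k (op x z) (op y z) e = pf op k (op x z') (op y z') e := by
    intro x y z z'
    have h := hab 1 (pT k (.mul (.var 0) (.var 1)) (.mul (.const y) (.var 1)) (.const e))
      y x ![z] ![z'] ?_
    · simpa only [eval_pT, eval_mul, eval_var, eval_const, d0, d1] using h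
    · simp only [eval_pT, eval_mul, eval_var, eval_const, d0, d1, P1, P2]
  have DR : ∀ x y z z' : A,
      pf op k (op z x) (op z y) e = pf op k (op z' x) (op z' y) e := by
    intro x y z z'
    have h := hab 1 (pT k (.mul (.var 1) (.var 0)) (.mul (.var 1) (.const y)) (.const e))
      y x ![z] ![z'] ?_
    · simpa only [eval_pT, eval_mul, eval_var, eval_const, d0, d1] using h
    · simp only [eval_pT, eval_mul, eval_var, eval_const, d0, d1, P1, P2]
  have J1 : ∀ a b : A,
      pf op k (op a e) (op b e) e = pf op k (op (pf op k a b e) e) (op e e) e := by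
    intro a b
    have h := hab 2 (pT k
        (pT k (.mul (.var 1) (.const e)) (.mul (.var 0) (.const e)) (.const e))
        (pT k (.mul (pT k (.var 2) (.var 0) (.const e)) (.const e))
              (.mul (.const e) (.const e)) (.const e))
        (.const e)) e b ![a, a] ![b, b] ?_
    · simp only [eval_pT, eval_mul, eval_var, eval_const, c0, c1, c2] at h
      simp only [P1, P2] at h
      exact Pinj _ _ (h.trans (P2 _ _).symm)
    · simp only [eval_pT, eval_mul, eval_var, eval_const, c0, c1, c2, P1, P2]
  have J2 : ∀ a b : A,
      pf op k (op e a) (op e b) e = pf op k (op e (pf op k a b e)) (op e e) e := by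
    intro a b
    have h := hab 2 (pT k
        (pT k (.mul (.const e) (.var 1)) (.mul (.const e) (.var 0)) (.const e))
        (pT k (.mul (.const e) (pT k (.var 2) (.var 0) (.const e)))
              (.mul (.const e) (.const e)) (.const e))
        (.const e)) e b ![a, a] ![b, b] ?_
    · simp only [eval_pT, eval_mul, eval_var, eval_const, c0, c1, c2] at h
      simp only [P1, P2] at h
      exact Pinj _ _ (h.trans (P2 _ _).symm)
    · simp only [eval_pT, eval_mul, eval_var, eval_const, c0, c1, c2, P1, P2]
  have I8 : ∀ a b m : A,
      pf op k a b e = pf op k (pf op k a m e) e (pf op k m b e) := by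
    intro a b m
    have h := hab 2 (pT k
        (pT k (.var 1) (.const b) (.const e))
        (pT k (pT k (.var 2) (.var 0) (.const e)) (.const e)
              (pT k (.var 0) (.const b) (.const e)))
        (.const e)) b m ![a, a] ![m, m] ?_
    · simp only [eval_pT, eval_var, eval_const, c0, c1, c2] at h
      simp only [P1, P2] at h
      exact Pinj _ _ (h.trans (P2 _ _).symm)
    · simp only [eval_pT, eval_var, eval_const, c0, c1, c2, P1, P2]
  -- the main lemma: "differences" of evaluations at assignments into B lie in B
  have H : ∀ {n : ℕ} (t : GTerm A n) (c d : Fin n → A),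
      (∀ i, c i ∈ B) → (∀ i, d i ∈ B) →
      pf op k (t.eval op c) (t.eval op d) e ∈ B := by
    intro n t
    induction t with
    | var i =>
        intro c d hc hd
        simp only [eval_var]
        exact Bp (hc i) (hd i) he
    | const a =>
        intro c d hc hd
        simp only [eval_const, P2]
        exact he
    | mul s r ihs ihr =>
        intro c d hc hd
        simp only [eval_mul]
        have hX : pf op k (op (s.eval op c) (r.eval op c)) (op (s.eval op d) (r.eval op c)) e ∈ B := by
          rw [DL (s.eval op c) (s.eval op d) (r.eval op c) e, J1]
          exact Bp (hBcl _ (ihs c d hc hd) _ he) (hBcl _ he _ he) he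
        have hY : pf op k (op (s.eval op d) (r.eval op c)) (op (s.eval op d) (r.eval op d)) e ∈ B := by
          rw [DR (r.eval op c) (r.eval op d) (s.eval op d) e, J2]
          exact Bp (hBcl _ he _ (ihr c d hc hd)) (hBcl _ he _ he) he
        rw [I8 (op (s.eval op c) (r.eval op c)) (op (s.eval op d) (r.eval op d))
          (op (s.eval op d) (r.eval op c))]
        exact Bp hX he hY
  have H' : ∀ {n : ℕ} (t : GTerm A n) (c d : Fin n → A),
      (∀ i, c i ∈ B) → (∀ i, d i ∈ B) → t.eval op d ∈ B → t.eval op c ∈ B := by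
    intro n t c d hc hd hder
    have h1 := H t c d hc hd
    have h2 : t.eval op c
        = pf op k (pf op k (t.eval op c) (t.eval op d) e) e (t.eval op d) := (I2 _ _ _).symm
    rw [h2]
    exact Bp h1 he hder
  -- membership in appended assignments
  have happ : ∀ {n m : ℕ} (c : Fin n → A) (c' : Fin m → A),
      (∀ i, c i ∈ B) → (∀ i, c' i ∈ B) → ∀ i, Fin.append c c' i ∈ B := by
    intro n m c c' hc hc' i
    refine Fin.addCases (motive := fun j => Fin.append c c' j ∈ B) (fun j => ?_) (fun j => ?_) i
    · show Fin.append c c' (Fin.castAdd m j) ∈ B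
      rw [Fin.append_left]; exact hc j
    · show Fin.append c c' (Fin.natAdd n j) ∈ B
      rw [Fin.append_right]; exact hc' j
  -- the congruence
  refine ⟨fun a b => ∃ (n : ℕ) (t : GTerm A n) (c d : Fin n → A),
      (∀ i, c i ∈ B) ∧ (∀ i, d i ∈ B) ∧ t.eval op c = a ∧ t.eval op d = b,
    ⟨?_, ?_, ?_⟩, ?_, e, ?_⟩
  · -- reflexivity
    intro x
    exact ⟨0, .const x, Fin.elim0, Fin.elim0, fun i => i.elim0, fun i => i.elim0,
      by simp, by simp⟩
  · -- symmetry
    rintro x y ⟨n, t, c, d, hc, hd, ec, ed⟩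
    exact ⟨n, t, d, c, hd, hc, ed, ec⟩
  · -- transitivity
    rintro x y z ⟨n1, t1, c1, d1, hc1, hd1, e1c, e1d⟩ ⟨n2, t2, c2, d2, hc2, hd2, e2c, e2d⟩
    refine ⟨n1 + n2 + n2,
      pT k (rename (fun i => Fin.castAdd n2 (Fin.castAdd n2 i)) t1)
           (rename (fun i => Fin.castAdd n2 (Fin.natAdd n1 i)) t2)
           (rename (fun i => Fin.natAdd (n1 + n2) i) t2),
      Fin.append (Fin.append c1 c2) c2,
      Fin.append (Fin.append d1 c2) d2, ?_, ?_, ?_, ?_⟩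
    · exact happ _ _ (happ _ _ hc1 hc2) hc2
    · exact happ _ _ (happ _ _ hd1 hc2) hd2
    · rw [eval_pT, eval_rename, eval_rename, eval_rename]
      have g1 : (Fin.append (Fin.append c1 c2) c2) ∘ (fun i => Fin.castAdd n2 (Fin.castAdd n2 i)) = c1 := by
        funext i; simp [Fin.append_left]
      have g2 : (Fin.append (Fin.append c1 c2) c2) ∘ (fun i => Fin.castAdd n2 (Fin.natAdd n1 i)) = c2 := by
        funext i; simp [Fin.append_left, Fin.append_right]
      have g3 : (Fin.append (Fin.append c1 c2) c2) ∘ (fun i => Fin.natAdd (n1 + n2) i) = c2 := by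
        funext i; simp [Fin.append_right]
      rw [g1, g2, g3, e1c, e2c, P1]
    · rw [eval_pT, eval_rename, eval_rename, eval_rename]
      have g1 : (Fin.append (Fin.append d1 c2) d2) ∘ (fun i => Fin.castAdd n2 (Fin.castAdd n2 i)) = d1 := by
        funext i; simp [Fin.append_left]
      have g2 : (Fin.append (Fin.append d1 c2) d2) ∘ (fun i => Fin.castAdd n2 (Fin.natAdd n1 i)) = c2 := by
        funext i; simp [Fin.append_left, Fin.append_right]
      have g3 : (Fin.append (Fin.append d1 c2) d2) ∘ (fun i => Fin.natAdd (n1 + n2) i) = d2 := by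
        funext i; simp [Fin.append_right]
      rw [g1, g2, g3, e1d, e2c, e2d, P2]
  · -- compatibility with op
    rintro a b a' b' ⟨n1, t1, c1, d1, hc1, hd1, e1c, e1d⟩ ⟨n2, t2, c2, d2, hc2, hd2, e2c, e2d⟩
    refine ⟨n1 + n2, .mul (rename (Fin.castAdd n2) t1) (rename (Fin.natAdd n1) t2),
      Fin.append c1 c2, Fin.append d1 d2,
      happ _ _ hc1 hc2, happ _ _ hd1 hd2, ?_, ?_⟩
    · rw [eval_mul, eval_rename, eval_rename]
      have g1 : (Fin.append c1 c2) ∘ (Fin.castAdd n2) = c1 := by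
        funext i; simp [Fin.append_left]
      have g2 : (Fin.append c1 c2) ∘ (Fin.natAdd n1) = c2 := by
        funext i; simp [Fin.append_right]
      rw [g1, g2, e1c, e2c]
    · rw [eval_mul, eval_rename, eval_rename]
      have g1 : (Fin.append d1 d2) ∘ (Fin.castAdd n2) = d1 := by
        funext i; simp [Fin.append_left]
      have g2 : (Fin.append d1 d2) ∘ (Fin.natAdd n1) = d2 := by
        funext i; simp [Fin.append_right]
      rw [g1, g2, e1d, e2d]
  · -- B is the class of e
    ext x
    simp only [Set.mem_setOf_eq]
    constructor
    · intro hx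
      exact ⟨1, .var 0, fun _ => x, fun _ => e, fun _ => hx, fun _ => he, by simp, by simp⟩
    · rintro ⟨n, t, c, d, hc, hd, ec, ed⟩
      have : t.eval op c ∈ B := H' t c d hc hd (ed.symm ▸ he)
      exact ec ▸ this
end

section
/- A semigroup ⟨A,·⟩ is an Abelian algebra if and only if ⟨A,·⟩ is stationary and for all a,b,c,d,u,v ∈ A the equality a·u·b = c·u·d implies a·v·b = c·v·d. -/
universe u

/-!
In a semigroup the value of a term `t(x, c̄)` is a product in which `x` occurs at fixed
positions, the same for every `c̄`. Starting from `t(u, c̄) = t(u, d̄)`, the occurrences of `u`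
are replaced by `v` one at a time, from left to right. Each replacement is an instance of the
middle condition `a·u·b = c·u·d → a·v·b = c·v·d`, or of stationarity when the occurrence
stands at the beginning or the end of the product. Both cases become one statement once the
surrounding factors are allowed to be empty, i.e. taken in `WithOne S`, and the induction on the
term proves the claim inside an arbitrary context `p · _ · s` of such factors.
-/

section Stationary

variable (S : Type*) [Semigroup S]

def Semigroup.IsStationary : Prop :=
  (∀ u v b c : S, u * b = u * c → v * b = v * c) ∧
    (∀ u v b c : S, b * u = c * u → b * v = c * v)

def Semigroup.IsMiddleStationary : Prop :=
  ∀ a b c d u v : S, a * u * b = c * u * d → a * v * b = c * v * d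

variable {S}

theorem WithOne.coe_mul_ne_one (a : S) (x : WithOne S) : (a : WithOne S) * x ≠ 1 := by
  induction x using WithOne.cases_on <;> simp [← WithOne.coe_mul]

theorem WithOne.mul_coe_ne_one (x : WithOne S) (a : S) : x * (a : WithOne S) ≠ 1 := by
  induction x using WithOne.cases_on <;> simp [← WithOne.coe_mul]

theorem Semigroup.withOne_mul_mul_congr (hS : Semigroup.IsStationary S)
    (hM : Semigroup.IsMiddleStationary S)
    {a b c d : WithOne S} (hac : a = 1 ↔ c = 1) (hbd : b = 1 ↔ d = 1) {u v : S}
    (h : a * u * b = c * u * d) : a * v * b = c * v * d := by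
  induction a using WithOne.cases_on <;> induction c using WithOne.cases_on <;>
    induction b using WithOne.cases_on <;> induction d using WithOne.cases_on <;>
    simp_all [← WithOne.coe_mul]
  exacts [hS.1 u v _ _, hS.2 u v _ _, fun _ => hM _ _ _ _ u v]

theorem GTerm.withOne_mul_eval_mul_congr (hS : Semigroup.IsStationary S)
    (hM : Semigroup.IsMiddleStationary S) {n : ℕ} (t : GTerm S (n + 1)) (u v : S)
    (c d : Fin n → S) {p p' s s' : WithOne S} (hp : p = 1 ↔ p' = 1) (hs : s = 1 ↔ s' = 1)
    (h : p * ↑(t.eval (· * ·) (Fin.cons u c)) * s = p' * ↑(t.eval (· * ·) (Fin.cons u d)) * s') :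
    p * ↑(t.eval (· * ·) (Fin.cons v c)) * s = p' * ↑(t.eval (· * ·) (Fin.cons v d)) * s' := by
  induction t generalizing p p' s s' with
  | var i =>
    cases i using Fin.cases with
    | zero =>
      simp only [GTerm.eval, Fin.cons_zero] at h ⊢
      exact Semigroup.withOne_mul_mul_congr hS hM hp hs h
    | succ j => simpa only [GTerm.eval, Fin.cons_succ] using h
  | const a => simpa only [GTerm.eval] using h
  | mul t₁ t₂ ih₁ ih₂ =>
    simp only [GTerm.eval, WithOne.coe_mul, ← mul_assoc] at h ⊢
    refine ih₂ (iff_of_false (WithOne.mul_coe_ne_one _ _) (WithOne.mul_coe_ne_one _ _)) hs ?_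
    simpa only [mul_assoc] using
      ih₁ hp (iff_of_false (WithOne.coe_mul_ne_one _ _) (WithOne.coe_mul_ne_one _ _))
        (by simpa only [mul_assoc] using h)

theorem Semigroup.isAbelianGroupoid_iff :
    IsAbelianGroupoid (· * · : S → S → S) ↔
      Semigroup.IsStationary S ∧ Semigroup.IsMiddleStationary S := by
  refine ⟨fun h => ⟨⟨fun u v b c => ?_, fun u v b c => ?_⟩, fun a b c d u v => ?_⟩,
    fun ⟨hS, hM⟩ n t u v c d h => ?_⟩
  · simpa [GTerm.eval] using h 1 (.mul (.var 0) (.var 1)) u v ![b] ![c]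
  · simpa [GTerm.eval] using h 1 (.mul (.var 1) (.var 0)) u v ![b] ![c]
  · simpa [GTerm.eval] using h 2 (.mul (.mul (.var 1) (.var 0)) (.var 2)) u v ![a, b] ![c, d]
  · simpa using t.withOne_mul_eval_mul_congr hS hM u v c d (p := 1) (s := 1) Iff.rfl Iff.rfl
      (by rw [h])

end Stationary

/-- A semigroup is an Abelian algebra iff it is stationary and
`a·u·b = c·u·d` implies `a·v·b = c·v·d`. -/
theorem stmt_9 {A : Type u} (op : A → A → A)
    (hassoc : ∀ a b c : A, op (op a b) c = op a (op b c)) :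
    IsAbelianGroupoid op ↔
      (((∀ u v b c : A, op u b = op u c → op v b = op v c) ∧
        (∀ u v b c : A, op b u = op c u → op b v = op c v)) ∧
       (∀ a b c d uu vv : A,
          op (op a uu) b = op (op c uu) d → op (op a vv) b = op (op c vv) d)) :=
  letI : Semigroup A := { mul := op, mul_assoc := hassoc }
  Semigroup.isAbelianGroupoid_iff
end

section
/- Let ⟨A,·⟩ be a semigroup which is an Abelian algebra. Then for every idempotent f ∈ A (i.e. f·f = f) and all x,y ∈ A, x·y = x·f·y. -/
universe u

/-- In an Abelian semigroup, `x·y = x·f·y` for every idempotent `f`. -/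
theorem stmt_11 {A : Type u} (op : A → A → A)
    (hassoc : ∀ a b c : A, op (op a b) c = op a (op b c))
    (hab : IsAbelianGroupoid op)
    (f : A) (hf : op f f = f) :
    ∀ x y : A, op x y = op (op x f) y := by
  intro x y
  have h := hab 1 (GTerm.mul (.var 0) (.var 1)) f x
      (fun _ => y) (fun _ => op f y)
      (by simp [GTerm.eval, ← hassoc, hf])
  simpa [GTerm.eval, ← hassoc] using h
end

section
/- Let ⟨A,·⟩ be a semigroup which is an Abelian algebra and satisfies condition (*). Then the relations X and Y are equivalence relations on the set A·A = {x·y : x,y ∈ A} (i.e. their restrictions to A·A are reflexive, symmetric and transitive). -/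
universe u

/-- The set `A·A = {x·y : x, y ∈ A}` of products in the groupoid `⟨A, op⟩`. -/
def prodSet {A : Type u} (op : A → A → A) : Set A := {z : A | ∃ x y : A, z = op x y}

/-- Condition (*): either `b·c·A = b·A` and `A·b·c = A·c` for all `b, c ∈ A`,
or the set `A·A` is finite. -/
def CondStar {A : Type u} (op : A → A → A) : Prop :=
  (∀ b c : A, {z : A | ∃ x : A, z = op (op b c) x} = {z : A | ∃ x : A, z = op b x} ∧
              {z : A | ∃ x : A, z = op x (op b c)} = {z : A | ∃ x : A, z = op x c}) ∨
  (prodSet op).Finite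

/-- The relation `X`: `x X y ⟺ ∃ z, z·x = x ∧ z·y = y ∧ z·z = z`. -/
def relX {A : Type u} (op : A → A → A) (x y : A) : Prop :=
  ∃ z : A, op z x = x ∧ op z y = y ∧ op z z = z

/-- The relation `Y`: `x Y y ⟺ ∃ z, x·z = x ∧ y·z = y ∧ z·z = z`. -/
def relY {A : Type u} (op : A → A → A) (x y : A) : Prop :=
  ∃ z : A, op x z = x ∧ op y z = y ∧ op z z = z

/-- Left transfer: if `u·c = u·d` then `v·c = v·d` for all `v`. -/
lemma lemL {A : Type u} {op : A → A → A} (hab : IsAbelianGroupoid op) {u c d : A}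
    (h : op u c = op u d) (v : A) : op v c = op v d := by
  have key := hab 1 (GTerm.mul (.var 0) (.var 1)) u v (fun _ => c) (fun _ => d)
  simp only [GTerm.eval, Fin.cons_zero] at key
  have h1 : ∀ (w e : A), (Fin.cons w (fun _ => e) : Fin 2 → A) 1 = e := fun _ _ => rfl
  simp only [h1] at key
  exact key h

/-- Right transfer: if `c·u = d·u` then `c·v = d·v` for all `v`. -/
lemma lemR {A : Type u} {op : A → A → A} (hab : IsAbelianGroupoid op) {u c d : A}
    (h : op c u = op d u) (v : A) : op c v = op d v := by
  have key := hab 1 (GTerm.mul (.var 1) (.var 0)) u v (fun _ => c) (fun _ => d)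
  simp only [GTerm.eval, Fin.cons_zero] at key
  have h1 : ∀ (w e : A), (Fin.cons w (fun _ => e) : Fin 2 → A) 1 = e := fun _ _ => rfl
  simp only [h1] at key
  exact key h

/-- Powers: `opow op y n = y^(n+1)`. -/
def opow {A : Type u} (op : A → A → A) (y : A) : ℕ → A
  | 0 => y
  | n + 1 => op (opow op y n) y

lemma opow_add {A : Type u} {op : A → A → A}
    (hassoc : ∀ a b c : A, op (op a b) c = op a (op b c)) (y : A) (a b : ℕ) :
    op (opow op y a) (opow op y b) = opow op y (a + b + 1) := by
  induction b with
  | zero => rfl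
  | succ n ih =>
    show op (opow op y a) (op (opow op y n) y) = _
    rw [← hassoc, ih]
    rfl

lemma opow_mem {A : Type u} (op : A → A → A) (y : A) (n : ℕ) :
    opow op y (n + 1) ∈ prodSet op := ⟨opow op y n, y, rfl⟩

/-- In the finite case, some distinct powers of `y` coincide. -/
lemma opow_collide {A : Type u} {op : A → A → A} (hfin : (prodSet op).Finite) (y : A) :
    ∃ i j : ℕ, i < j ∧ opow op y (i + 1) = opow op y (j + 1) := by
  have hsub : Set.range (fun n : ℕ => opow op y (n + 1)) ⊆ prodSet op := by
    rintro z ⟨n, rfl⟩; exact opow_mem op y n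
  have hninj : ¬ Function.Injective (fun n : ℕ => opow op y (n + 1)) := by
    intro hinj
    exact (Set.infinite_range_of_injective hinj) (hfin.subset hsub)
  rw [Function.not_injective_iff] at hninj
  obtain ⟨a, b, hab, hne⟩ := hninj
  rcases lt_or_gt_of_ne hne with h | h
  · exact ⟨a, b, h, hab⟩
  · exact ⟨b, a, h, hab.symm⟩

/-- Every element of `A·A` has a right unit. -/
lemma exists_right_unit {A : Type u} {op : A → A → A}
    (hassoc : ∀ a b c : A, op (op a b) c = op a (op b c))
    (hab : IsAbelianGroupoid op) (hstar : CondStar op)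
    {a : A} (ha : a ∈ prodSet op) : ∃ t : A, op a t = a := by
  obtain ⟨x, y, rfl⟩ := ha
  rcases hstar with hstar | hfin
  · have h1 := (hstar x y).1
    have hmem : op x y ∈ {z : A | ∃ w : A, z = op x w} := ⟨y, rfl⟩
    rw [← h1] at hmem
    obtain ⟨t, ht⟩ := hmem
    exact ⟨t, ht.symm⟩
  · obtain ⟨i, j, hij, hcol⟩ := opow_collide hfin y
    have key : op (opow op y i) y = op (opow op y i) (op y (opow op y (j - i - 1))) := by
      have h2 : op y (opow op y (j - i - 1)) = opow op y (j - i) := by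
        have h3 := opow_add hassoc y 0 (j - i - 1)
        have h4 : 0 + (j - i - 1) + 1 = j - i := by omega
        rw [h4] at h3
        exact h3
      rw [h2, opow_add hassoc y i (j - i)]
      have h5 : i + (j - i) + 1 = j + 1 := by omega
      rw [h5]
      exact hcol
    have h6 := lemL hab key x
    refine ⟨opow op y (j - i - 1), ?_⟩
    rw [← hassoc] at h6
    exact h6.symm

/-- Every element of `A·A` has a left unit. -/
lemma exists_left_unit {A : Type u} {op : A → A → A}
    (hassoc : ∀ a b c : A, op (op a b) c = op a (op b c))
    (hab : IsAbelianGroupoid op) (hstar : CondStar op)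
    {a : A} (ha : a ∈ prodSet op) : ∃ s : A, op s a = a := by
  obtain ⟨x, y, rfl⟩ := ha
  rcases hstar with hstar | hfin
  · have h2 := (hstar x y).2
    have hmem : op x y ∈ {z : A | ∃ w : A, z = op w y} := ⟨x, rfl⟩
    rw [← h2] at hmem
    obtain ⟨s, hs⟩ := hmem
    exact ⟨s, hs.symm⟩
  · obtain ⟨i, j, hij, hcol⟩ := opow_collide hfin x
    have key : op x (opow op x i) = op (op (opow op x (j - i - 1)) x) (opow op x i) := by
      have h0 : op x (opow op x i) = opow op x (i + 1) := by
        have h3 := opow_add hassoc x 0 i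
        have h4 : 0 + i + 1 = i + 1 := by omega
        rw [h4] at h3
        exact h3
      have h1 : op (opow op x (j - i - 1)) x = opow op x (j - i) := by
        show op (opow op x (j - i - 1)) (opow op x 0) = _
        rw [opow_add hassoc x (j - i - 1) 0]
        congr 1
        omega
      rw [h0, h1, opow_add hassoc x (j - i) i]
      have h5 : j - i + i + 1 = j + 1 := by omega
      rw [h5]
      exact hcol
    have h6 := lemR hab key y
    refine ⟨opow op x (j - i - 1), ?_⟩
    rw [hassoc] at h6
    exact h6.symm

/-- A right unit can be upgraded to an idempotent right unit. -/
lemma exists_idem_right_unit {A : Type u} {op : A → A → A}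
    (hassoc : ∀ a b c : A, op (op a b) c = op a (op b c))
    (hab : IsAbelianGroupoid op) {a t : A} (ht : op a t = a) :
    ∃ e : A, op a e = a ∧ op e e = e := by
  have h1 : op a t = op a (op t t) := by
    rw [← hassoc, ht, ht]
  have h2 := lemL hab h1
  refine ⟨op t t, ?_, ?_⟩
  · rw [← hassoc, ht, ht]
  · have h3 : op t (op t t) = op t t := (h2 t).symm
    calc op (op t t) (op t t) = op t (op t (op t t)) := hassoc t t (op t t)
      _ = op t (op t t) := congrArg (op t) h3
      _ = op t t := h3

/-- A left unit can be upgraded to an idempotent left unit. -/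
lemma exists_idem_left_unit {A : Type u} {op : A → A → A}
    (hassoc : ∀ a b c : A, op (op a b) c = op a (op b c))
    (hab : IsAbelianGroupoid op) {a s : A} (hs : op s a = a) :
    ∃ e : A, op e a = a ∧ op e e = e := by
  have h1 : op s a = op (op s s) a := by
    rw [hassoc, hs, hs]
  have h2 := lemR hab h1
  refine ⟨op s s, ?_, ?_⟩
  · rw [hassoc, hs, hs]
  · have h3 : op s s = op (op s s) s := h2 s
    calc op (op s s) (op s s) = op (op (op s s) s) s := (hassoc (op s s) s s).symm
      _ = op (op s s) s := congrArg (fun w => op w s) h3.symm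
      _ = op s s := h3.symm

/-- In an Abelian semigroup satisfying condition (*), the relations `X` and `Y`
are equivalence relations on `A·A`. -/
theorem stmt_12 {A : Type u} (op : A → A → A)
    (hassoc : ∀ a b c : A, op (op a b) c = op a (op b c))
    (hab : IsAbelianGroupoid op) (hstar : CondStar op) :
    ((∀ a ∈ prodSet op, relX op a a) ∧
     (∀ a ∈ prodSet op, ∀ b ∈ prodSet op, relX op a b → relX op b a) ∧
     (∀ a ∈ prodSet op, ∀ b ∈ prodSet op, ∀ c ∈ prodSet op,
        relX op a b → relX op b c → relX op a c)) ∧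
    ((∀ a ∈ prodSet op, relY op a a) ∧
     (∀ a ∈ prodSet op, ∀ b ∈ prodSet op, relY op a b → relY op b a) ∧
     (∀ a ∈ prodSet op, ∀ b ∈ prodSet op, ∀ c ∈ prodSet op,
        relY op a b → relY op b c → relY op a c)) := by
  refine ⟨⟨?_, ?_, ?_⟩, ⟨?_, ?_, ?_⟩⟩
  · -- X reflexive
    intro a ha
    obtain ⟨s, hs⟩ := exists_left_unit hassoc hab hstar ha
    obtain ⟨e, he, hee⟩ := exists_idem_left_unit hassoc hab hs
    exact ⟨e, he, he, hee⟩
  · -- X symmetric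
    rintro a _ b _ ⟨z, h1, h2, h3⟩
    exact ⟨z, h2, h1, h3⟩
  · -- X transitive
    rintro a _ b _ c _ ⟨z, za, zb, zz⟩ ⟨w, wb, wc, ww⟩
    have h : op z b = op w b := zb.trans wb.symm
    have hc : op z c = c := (lemR hab h c).trans wc
    exact ⟨z, za, hc, zz⟩
  · -- Y reflexive
    intro a ha
    obtain ⟨t, ht⟩ := exists_right_unit hassoc hab hstar ha
    obtain ⟨e, he, hee⟩ := exists_idem_right_unit hassoc hab ht
    exact ⟨e, he, he, hee⟩
  · -- Y symmetric
    rintro a _ b _ ⟨z, h1, h2, h3⟩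
    exact ⟨z, h2, h1, h3⟩
  · -- Y transitive
    rintro a _ b _ c _ ⟨z, az, bz, zz⟩ ⟨w, bw, cw, ww⟩
    have h : op b z = op b w := bz.trans bw.symm
    have haw : op a w = a := (lemL hab h a).symm.trans az
    exact ⟨w, haw, cw, ww⟩
end

section
/- Let ⟨A,·⟩ be a semigroup which is an Abelian algebra and satisfies condition (*). Then for all idempotents e,f ∈ A, the product e·f is an idempotent and Φ_e ∩ Ψ_f = {e·f}. -/
universe u

/-- The relation `Φ`: `x Φ y ⟺ ∃ z, x·z = y·z`. -/
def relPhi {A : Type u} (op : A → A → A) (x y : A) : Prop :=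
  ∃ z : A, op x z = op y z

/-- The relation `Ψ`: `x Ψ y ⟺ ∃ z, z·x = z·y`. -/
def relPsi {A : Type u} (op : A → A → A) (x y : A) : Prop :=
  ∃ z : A, op z x = op z y

/-- In an Abelian groupoid, `Φ` upgrades to a universally quantified statement. -/
theorem phi_strong {A : Type u} (op : A → A → A) (hab : IsAbelianGroupoid op)
    {x y : A} (h : relPhi op x y) : ∀ v, op x v = op y v := by
  obtain ⟨z, hz⟩ := h
  intro v
  have := hab 1 (.mul (.var 1) (.var 0)) z v ![x] ![y] (by simpa [GTerm.eval] using hz)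
  simpa [GTerm.eval] using this

/-- In an Abelian groupoid, `Ψ` upgrades to a universally quantified statement. -/
theorem psi_strong {A : Type u} (op : A → A → A) (hab : IsAbelianGroupoid op)
    {x y : A} (h : relPsi op x y) : ∀ v, op v x = op v y := by
  obtain ⟨z, hz⟩ := h
  intro v
  have := hab 1 (.mul (.var 0) (.var 1)) z v ![x] ![y] (by simpa [GTerm.eval] using hz)
  simpa [GTerm.eval] using this

/-- In an Abelian semigroup satisfying condition (*), for idempotents `e, f`
the product `e·f` is an idempotent and `Φ_e ∩ Ψ_f = {e·f}`. -/
theorem stmt_13 {A : Type u} (op : A → A → A)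
    (hassoc : ∀ a b c : A, op (op a b) c = op a (op b c))
    (hab : IsAbelianGroupoid op) (hstar : CondStar op)
    (e f : A) (he : op e e = e) (hf : op f f = f) :
    op (op e f) (op e f) = op e f ∧
    {x : A | x ∈ prodSet op ∧ relPhi op x e} ∩ {x : A | x ∈ prodSet op ∧ relPsi op x f}
      = {op e f} := by
  -- Φ(ef, e) with witness fe
  have hPhiA : ∀ z, op (op e f) z = op e z := by
    apply phi_strong op hab
    refine ⟨op f e, ?_⟩
    rw [hassoc, ← hassoc f f e, hf]
  -- Ψ(ef, f) with witness e
  have hPsiA : ∀ z, op z (op e f) = op z f := by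
    apply psi_strong op hab
    refine ⟨e, ?_⟩
    rw [← hassoc, he]
  have hidem : op (op e f) (op e f) = op e f := by
    rw [hPhiA (op e f), hPsiA e]
  refine ⟨hidem, ?_⟩
  ext x
  constructor
  · rintro ⟨⟨⟨p, q, hx⟩, hphi⟩, ⟨-, hpsi⟩⟩
    have h1 : ∀ z, op x z = op e z := phi_strong op hab hphi
    have h2 : ∀ z, op z x = op z f := psi_strong op hab hpsi
    -- Φ(p, e·p) with witness q·q
    have key : op p (op q q) = op (op e p) (op q q) := by
      rw [← hassoc p q q, ← hx, h1 q, hassoc, ← hassoc p q q, ← hx, h1 q,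
        ← hassoc, he]
    have h3 : ∀ v, op p v = op (op e p) v := phi_strong op hab ⟨op q q, key⟩
    have : x = op e f := by
      rw [hx, h3 q, hassoc, ← hx, h2 e]
    simpa using this
  · rintro rfl
    exact ⟨⟨⟨e, f, rfl⟩, ⟨op f e, hPhiA (op f e)⟩⟩, ⟨⟨e, f, rfl⟩, ⟨e, hPsiA e⟩⟩⟩
end

section
/- Let ⟨A,·⟩ be a semigroup which is an Abelian algebra and satisfies condition (*). Then the sets {Z_{e·f} : e,f idempotents of A} form a partition of A·A into subsets closed under ·, each ⟨Z_{e·f},·⟩ is an Abelian group under ·, Z_{e·f}·Z_{e′·f′} ⊆ Z_{e·f′} for all idempotents e,f,e′,f′ ∈ A (so that ⟨A·A,·⟩ is a rectangular band of Abelian groups), and moreover Z_{e·f′} = Z_{e·f}·Z_{e′·f′} for all idempotents e,f,e′,f′ ∈ A. -/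
universe u

/-- The subset `S` of the semigroup `⟨A, op⟩` is closed under `op` and forms an
Abelian group under `op`. -/
def IsAbelianGroupOn {A : Type u} (op : A → A → A) (S : Set A) : Prop :=
  (∀ x ∈ S, ∀ y ∈ S, op x y ∈ S) ∧
  ∃ e ∈ S, (∀ x ∈ S, op e x = x ∧ op x e = x) ∧
    (∀ x ∈ S, ∃ y ∈ S, op x y = e) ∧
    (∀ x ∈ S, ∀ y ∈ S, op x y = op y x)

/-- The class `Z_g = {x ∈ A·A : x X g ∧ x Y g}`. -/
def Zclass {A : Type u} (op : A → A → A) (g : A) : Set A :=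
  {x : A | x ∈ prodSet op ∧ relX op x g ∧ relY op x g}

namespace Stmt15
variable {A : Type u}

theorem lem1 {op : A → A → A} (hab : IsAbelianGroupoid op) :
    ∀ u v c d : A, op u c = op u d → op v c = op v d := by
  intro u v c d h
  have H := hab 1 (.mul (.var 0) (.var 1)) u v ![c] ![d]
  simp [GTerm.eval] at H
  exact H h

theorem lem2 {op : A → A → A} (hab : IsAbelianGroupoid op) :
    ∀ u v c d : A, op c u = op d u → op c v = op d v := by
  intro u v c d h
  have H := hab 1 (.mul (.var 1) (.var 0)) u v ![c] ![d]
  simp [GTerm.eval] at H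
  exact H h

theorem lemsq {op : A → A → A} (hab : IsAbelianGroupoid op) :
    ∀ u v c d : A, op (op u c) u = op (op u d) u → op (op v c) v = op (op v d) v := by
  intro u v c d h
  have H := hab 1 (.mul (.mul (.var 0) (.var 1)) (.var 0)) u v ![c] ![d]
  simp [GTerm.eval] at H
  exact H h

theorem lem3 {op : A → A → A} (hab : IsAbelianGroupoid op) :
    ∀ u v c₁ c₂ d₁ d₂ : A, op (op c₁ u) c₂ = op (op d₁ u) d₂ →
      op (op c₁ v) c₂ = op (op d₁ v) d₂ := by
  intro u v c₁ c₂ d₁ d₂ h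
  have H := hab 2 (.mul (.mul (.var 1) (.var 0)) (.var 2)) u v ![c₁, c₂] ![d₁, d₂]
  simp [GTerm.eval] at H
  exact H h

/-- sandwich identity: for idempotents p, q we have q·p·q = q. -/
theorem sandwich {op : A → A → A} (hassoc : ∀ a b c : A, op (op a b) c = op a (op b c))
    (hab : IsAbelianGroupoid op) {p q : A} (hp : op p p = p) (hq : op q q = q) :
    op (op q p) q = q := by
  have prem : op (op (op q p) p) (op q p) = op (op (op q p) q) (op q p) := by
    have l : op (op q p) p = op q p := by rw [hassoc, hp]
    rw [l, hassoc q p q, hassoc, hassoc, hassoc, ← hassoc q q p, hq]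
  have H := lemsq hab (op q p) q p q prem
  rw [hq] at H
  rw [H, hq]

/-- powers: `pw op c n = c^(n+1)` -/
def pw (op : A → A → A) (c : A) : ℕ → A
  | 0 => c
  | n+1 => op (pw op c n) c

theorem pw_succ_left {op : A → A → A} (hassoc : ∀ a b c : A, op (op a b) c = op a (op b c))
    (c : A) (n : ℕ) : pw op c (n+1) = op c (pw op c n) := by
  induction n with
  | zero => rfl
  | succ n ih =>
    show op (pw op c (n+1)) c = op c (op (pw op c n) c)
    rw [ih, hassoc]

theorem pw_add {op : A → A → A} (hassoc : ∀ a b c : A, op (op a b) c = op a (op b c))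
    (c : A) (m n : ℕ) : pw op c (m + n + 1) = op (pw op c m) (pw op c n) := by
  induction n with
  | zero => rfl
  | succ n ih =>
    show op (pw op c (m + n + 1)) c = op (pw op c m) (op (pw op c n) c)
    rw [ih, hassoc]

theorem pw_mem {op : A → A → A} (c : A) (n : ℕ) : pw op c (n+1) ∈ prodSet op :=
  ⟨pw op c n, c, rfl⟩

/-- every element of A·A has an idempotent right local identity -/
theorem right_local {op : A → A → A} (hassoc : ∀ a b c : A, op (op a b) c = op a (op b c))
    (hlem1 : ∀ u v c d : A, op u c = op u d → op v c = op v d)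
    (hAA : (∀ b c : A, {z : A | ∃ x : A, z = op (op b c) x} = {z : A | ∃ x : A, z = op b x})
      ∨ (prodSet op).Finite) :
    ∀ a ∈ prodSet op, ∃ z : A, op z z = z ∧ op a z = a := by
  rintro a ⟨b, c, rfl⟩
  set a := op b c with ha
  rcases hAA with h1 | hfin
  · have hmem : a ∈ {z : A | ∃ x : A, z = op b x} := ⟨c, rfl⟩
    rw [← h1 b c] at hmem
    obtain ⟨x, hax⟩ := hmem
    rw [← ha] at hax
    have h2 : op a (op x x) = op a x := by
      rw [← hassoc, ← hax]
      exact hax.symm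
    have hv : ∀ v, op v (op x x) = op v x := fun v => hlem1 a v _ _ h2
    refine ⟨op x x, ?_, ?_⟩
    · have e1 : op x (op x x) = op x x := hv x
      have e2 : op (op x x) (op x x) = op (op x x) x := hv (op x x)
      rw [e2, hassoc, e1]
    · rw [hv a, ← hax]
  · haveI := hfin.to_subtype
    obtain ⟨i, j, hne, hEq⟩ :=
      Finite.exists_ne_map_eq_of_infinite (fun n : ℕ => (⟨pw op c (n+1), pw_mem c n⟩ : prodSet op))
    have key : pw op c (i+1) = pw op c (j+1) := congrArg Subtype.val hEq
    have main : ∀ i j : ℕ, i < j → pw op c (i+1) = pw op c (j+1) →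
        ∃ z : A, op z z = z ∧ op a z = a := by
      clear hne key hEq i j
      intro i j hlt key
      obtain ⟨D, rfl⟩ := Nat.exists_eq_add_of_lt hlt
      have e1 : i + D + 1 + 1 = i + (D + 1) + 1 := by omega
      rw [e1, pw_add hassoc] at key
      have hc : ∀ v, op v c = op v (pw op c (D+1)) := fun v => hlem1 (pw op c i) v _ _ key
      have hck : ∀ k v, op v (pw op c k) = op v (pw op c (k + (D+1))) := by
        intro k
        induction k with
        | zero => intro v; rw [Nat.zero_add]; exact hc v
        | succ k ih =>
          intro v
          show op v (op (pw op c k) c) = _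
          have e2 : k + 1 + (D + 1) = (k + (D+1)) + 1 := by omega
          rw [e2]
          show _ = op v (op (pw op c (k + (D+1))) c)
          rw [← hassoc, ← hassoc, ih v]
      have hstep : ∀ m, pw op c (m+1) = pw op c (m + 1 + (D+1)) := by
        intro m
        have := hck m c
        rw [pw_succ_left hassoc c m, this, ← pw_succ_left hassoc]
        have e3 : m + (D+1) + 1 = m + 1 + (D+1) := by omega
        rw [e3]
      have h1 : a = op a (pw op c D) := by
        calc a = op b c := ha
          _ = op b (pw op c (D+1)) := hc b
          _ = op b (op c (pw op c D)) := by rw [pw_succ_left hassoc]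
          _ = op (op b c) (pw op c D) := (hassoc _ _ _).symm
          _ = op a (pw op c D) := by rw [← ha]
      refine ⟨pw op c (2*D+1), ?_, ?_⟩
      · rw [← pw_add hassoc]
        have s1 := hstep (2*D)
        have s2 := hstep (2*D+1+D)
        have e7 : (2*D+1) + (2*D+1) + 1 = 2*D+1+D+1+(D+1) := by omega
        have e8 : 2*D+1+(D+1) = 2*D+1+D+1 := by omega
        rw [e7, ← s2, ← e8, ← s1]
      · have e8 : 2*D+1 = D + D + 1 := by omega
        rw [e8, pw_add hassoc, ← hassoc, ← h1, ← h1]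
    rcases lt_or_gt_of_ne hne with h | h
    · exact main i j h key
    · exact main j i h key.symm

/-- every element of A·A has an idempotent left local identity -/
theorem left_local {op : A → A → A} (hassoc : ∀ a b c : A, op (op a b) c = op a (op b c))
    (hlem2 : ∀ u v c d : A, op c u = op d u → op c v = op d v)
    (hAA : (∀ b c : A, {z : A | ∃ x : A, z = op x (op b c)} = {z : A | ∃ x : A, z = op x c})
      ∨ (prodSet op).Finite) :
    ∀ a ∈ prodSet op, ∃ z : A, op z z = z ∧ op z a = a := by
  set op' : A → A → A := fun x y => op y x with hop'
  have hassoc' : ∀ a b c : A, op' (op' a b) c = op' a (op' b c) := fun a b c => (hassoc c b a).symm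
  have hlem1' : ∀ u v c d : A, op' u c = op' u d → op' v c = op' v d :=
    fun u v c d h => hlem2 u v c d h
  have hps : prodSet op' = prodSet op := by
    ext z
    constructor
    · rintro ⟨x, y, rfl⟩; exact ⟨y, x, rfl⟩
    · rintro ⟨x, y, rfl⟩; exact ⟨y, x, rfl⟩
  have hAA' : (∀ b c : A, {z : A | ∃ x : A, z = op' (op' b c) x} = {z : A | ∃ x : A, z = op' b x})
      ∨ (prodSet op').Finite := by
    rcases hAA with h | h
    · exact Or.inl (fun b c => h c b)
    · exact Or.inr (by rw [hps]; exact h)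
  intro a ha
  obtain ⟨z, hz1, hz2⟩ := right_local hassoc' hlem1' hAA' a (by rw [hps]; exact ha)
  exact ⟨z, hz1, hz2⟩

theorem mem_Zclass_iff {op : A → A → A} (hassoc : ∀ a b c : A, op (op a b) c = op a (op b c))
    (hab : IsAbelianGroupoid op) {e f : A}
    (he : op e e = e) (hf : op f f = f) (x : A) :
    x ∈ Zclass op (op e f) ↔ x ∈ prodSet op ∧ op e x = x ∧ op x f = x := by
  constructor
  · rintro ⟨hx, ⟨z, hz1, hz2, hz3⟩, ⟨w, hw1, hw2, hw3⟩⟩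
    refine ⟨hx, ?_, ?_⟩
    · have heg : op e (op e f) = op e f := by rw [← hassoc, he]
      have h := lem2 hab (op e f) x z e (hz2.trans heg.symm)
      rw [← h]
      exact hz1
    · have hgf : op (op e f) f = op e f := by rw [hassoc, hf]
      have h := lem1 hab (op e f) x w f (hw2.trans hgf.symm)
      rw [← h]
      exact hw1
  · rintro ⟨hx, hex, hxf⟩
    exact ⟨hx, ⟨e, hex, by rw [← hassoc, he], he⟩, ⟨f, hxf, by rw [hassoc, hf], hf⟩⟩

end Stmt15

/-- In an Abelian semigroup satisfying condition (*): the sets `Z_{e·f}`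
(for idempotents `e, f`) partition `A·A`, each is closed under `op` and is an
Abelian group under `op`, `Z_{e·f}·Z_{e'·f'} ⊆ Z_{e·f'}` (so `A·A` is a
rectangular band of Abelian groups), and moreover `Z_{e·f'} = Z_{e·f}·Z_{e'·f'}`. -/
theorem stmt_15 {A : Type u} (op : A → A → A)
    (hassoc : ∀ a b c : A, op (op a b) c = op a (op b c))
    (hab : IsAbelianGroupoid op) (hstar : CondStar op) :
    (∀ a ∈ prodSet op, ∃ e f : A, op e e = e ∧ op f f = f ∧ a ∈ Zclass op (op e f)) ∧
    (∀ e f e' f' : A, op e e = e → op f f = f → op e' e' = e' → op f' f' = f' →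
      Zclass op (op e f) = Zclass op (op e' f') ∨
      Zclass op (op e f) ∩ Zclass op (op e' f') = ∅) ∧
    (∀ e f : A, op e e = e → op f f = f → IsAbelianGroupOn op (Zclass op (op e f))) ∧
    (∀ e f e' f' : A, op e e = e → op f f = f → op e' e' = e' → op f' f' = f' →
      ∀ x ∈ Zclass op (op e f), ∀ y ∈ Zclass op (op e' f'), op x y ∈ Zclass op (op e f')) ∧
    (∀ e f e' f' : A, op e e = e → op f f = f → op e' e' = e' → op f' f' = f' →
      Zclass op (op e f') =
        {z : A | ∃ x ∈ Zclass op (op e f), ∃ y ∈ Zclass op (op e' f'), z = op x y}) := by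
  have L1 := Stmt15.lem1 hab
  have L2 := Stmt15.lem2 hab
  have L3 := Stmt15.lem3 hab
  have locR : ∀ a ∈ prodSet op, ∃ z : A, op z z = z ∧ op a z = a := by
    apply Stmt15.right_local hassoc L1
    rcases hstar with h | h
    · exact Or.inl (fun b c => (h b c).1)
    · exact Or.inr h
  have locL : ∀ a ∈ prodSet op, ∃ z : A, op z z = z ∧ op z a = a := by
    apply Stmt15.left_local hassoc L2
    rcases hstar with h | h
    · exact Or.inl (fun b c => (h b c).2)
    · exact Or.inr h
  have memZ : ∀ e f : A, op e e = e → op f f = f → ∀ x : A,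
      (x ∈ Zclass op (op e f) ↔ x ∈ prodSet op ∧ op e x = x ∧ op x f = x) :=
    fun e f he hf x => Stmt15.mem_Zclass_iff hassoc hab he hf x
  refine ⟨?_, ?_, ?_, ?_, ?_⟩
  · -- covering
    intro a ha
    obtain ⟨z, hz, haz⟩ := locR a ha
    obtain ⟨w, hw, hwa⟩ := locL a ha
    exact ⟨w, z, hw, hz, (memZ w z hw hz a).2 ⟨ha, hwa, haz⟩⟩
  · -- partition
    intro e f e' f' he hf he' hf'
    rcases Set.eq_empty_or_nonempty (Zclass op (op e f) ∩ Zclass op (op e' f')) with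
      hemp | ⟨x, hx1, hx2⟩
    · exact Or.inr hemp
    · left
      obtain ⟨_, hex, hxf⟩ := (memZ e f he hf x).1 hx1
      obtain ⟨_, he'x, hxf'⟩ := (memZ e' f' he' hf' x).1 hx2
      have hE : ∀ v, op e v = op e' v := fun v => L2 x v e e' (hex.trans he'x.symm)
      have hF : ∀ v, op v f = op v f' := fun v => L1 x v f f' (hxf.trans hxf'.symm)
      ext y
      rw [memZ e f he hf y, memZ e' f' he' hf' y, hE y, hF y]
  · -- each class is an abelian group
    intro e f he hf
    have hge : op e (op e f) = op e f := by rw [← hassoc, he]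
    have hgf : op (op e f) f = op e f := by rw [hassoc, hf]
    have sand_fef : op (op f e) f = f := Stmt15.sandwich hassoc hab he hf
    have hgg : op (op e f) (op e f) = op e f := by
      rw [hassoc e f (op e f), ← hassoc f e f, sand_fef]
    have hgZ : op e f ∈ Zclass op (op e f) :=
      (memZ e f he hf (op e f)).2 ⟨⟨e, f, rfl⟩, hge, hgf⟩
    have hid_left : ∀ x ∈ Zclass op (op e f), op (op e f) x = x := by
      intro x hx
      obtain ⟨hxp, hex, hxf⟩ := (memZ e f he hf x).1 hx
      have h0 : op (op e f) (op (op e f) x) = op (op e f) x := by rw [← hassoc, hgg]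
      have hv := L1 (op e f) e _ _ h0
      rw [hex] at hv
      calc op (op e f) x = op (op e (op e f)) x := by rw [hge]
        _ = op e (op (op e f) x) := hassoc _ _ _
        _ = x := hv
    have hid_right : ∀ x ∈ Zclass op (op e f), op x (op e f) = x := by
      intro x hx
      obtain ⟨hxp, hex, hxf⟩ := (memZ e f he hf x).1 hx
      have h0 : op (op x (op e f)) (op e f) = op x (op e f) := by rw [hassoc, hgg]
      have hv := L2 (op e f) f _ _ h0
      rw [hxf] at hv
      calc op x (op e f) = op x (op (op e f) f) := by rw [hgf]
        _ = op (op x (op e f)) f := (hassoc _ _ _).symm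
        _ = x := hv
    have hclos : ∀ x ∈ Zclass op (op e f), ∀ y ∈ Zclass op (op e f),
        op x y ∈ Zclass op (op e f) := by
      intro x hx y hy
      obtain ⟨hxp, hex, hxf⟩ := (memZ e f he hf x).1 hx
      obtain ⟨hyp, hey, hyf⟩ := (memZ e f he hf y).1 hy
      exact (memZ e f he hf _).2 ⟨⟨x, y, rfl⟩, by rw [← hassoc, hex], by rw [hassoc, hyf]⟩
    refine ⟨hclos, op e f, hgZ, fun x hx => ⟨hid_left x hx, hid_right x hx⟩, ?_, ?_⟩
    · -- inverses
      intro x hx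
      obtain ⟨hxp, hex, hxf⟩ := (memZ e f he hf x).1 hx
      have hs : ∃ s : A, op x s = op e f := by
        rcases hstar with h1 | hfin
        · have h1x := (h1 e x).1
          have h1g := (h1 e f).1
          rw [hex] at h1x
          have hmem : op e f ∈ {z : A | ∃ w : A, z = op (op e f) w} := ⟨op e f, hgg.symm⟩
          rw [h1g, ← h1x] at hmem
          obtain ⟨s, hgs⟩ := hmem
          exact ⟨s, hgs.symm⟩
        · haveI := hfin.to_subtype
          have pwZ : ∀ n, Stmt15.pw op x n ∈ Zclass op (op e f) := by
            intro n
            induction n with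
            | zero => exact hx
            | succ n ih => exact hclos _ ih _ hx
          have pwP : ∀ n, Stmt15.pw op x n ∈ prodSet op :=
            fun n => ((memZ e f he hf _).1 (pwZ n)).1
          obtain ⟨i, j, hne, hEq⟩ := Finite.exists_ne_map_eq_of_infinite
            (fun n : ℕ => (⟨Stmt15.pw op x n, pwP n⟩ : prodSet op))
          have key : Stmt15.pw op x i = Stmt15.pw op x j := congrArg Subtype.val hEq
          have main : ∀ i j : ℕ, i < j → Stmt15.pw op x i = Stmt15.pw op x j →
              ∃ s : A, op x s = op e f := by
            clear hne key hEq i j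
            intro i j hlt key
            obtain ⟨D, rfl⟩ := Nat.exists_eq_add_of_lt hlt
            rw [Stmt15.pw_add hassoc] at key
            have kg : op (Stmt15.pw op x i) (op e f)
                = op (Stmt15.pw op x i) (Stmt15.pw op x D) := by
              rw [hid_right _ (pwZ i)]; exact key
            have hv := L1 (Stmt15.pw op x i) e _ _ kg
            rw [hge] at hv
            have heD : op e (Stmt15.pw op x D) = Stmt15.pw op x D :=
              ((memZ e f he hf _).1 (pwZ D)).2.1
            rw [heD] at hv
            cases D with
            | zero => exact ⟨op e f, by rw [hid_right x hx]; exact hv.symm⟩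
            | succ k =>
              exact ⟨Stmt15.pw op x k, by
                rw [← Stmt15.pw_succ_left hassoc]; exact hv.symm⟩
          rcases lt_or_gt_of_ne hne with h | h
          · exact main i j h key
          · exact main j i h key.symm
      obtain ⟨s, hxs⟩ := hs
      refine ⟨op (op (op e f) s) (op e f), ?_, ?_⟩
      · refine (memZ e f he hf _).2 ⟨⟨op (op e f) s, op e f, rfl⟩, ?_, ?_⟩
        · rw [← hassoc e (op (op e f) s) (op e f), ← hassoc e (op e f) s, hge]
        · rw [hassoc (op (op e f) s) (op e f) f, hgf]
      · rw [← hassoc x (op (op e f) s) (op e f), ← hassoc x (op e f) s,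
          hid_right x hx, hxs, hgg]
    · -- commutativity
      intro x hx y hy
      have prem : op (op (op e f) (op e f)) y = op (op (op (op e f) y) (op e f)) (op e f) := by
        rw [hgg, hid_left y hy, hid_right y hy, hid_right y hy]
      have hv := L3 (op e f) x (op e f) y (op (op e f) y) (op e f) prem
      rw [hid_left x hx, hid_left y hy] at hv
      rw [hid_right (op y x) (hclos y hy x hx)] at hv
      exact hv
  · -- rectangular law
    intro e f e' f' he hf he' hf' x hx y hy
    obtain ⟨hxp, hex, hxf⟩ := (memZ e f he hf x).1 hx
    obtain ⟨hyp, he'y, hyf'⟩ := (memZ e' f' he' hf' y).1 hy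
    exact (memZ e f' he hf' _).2 ⟨⟨x, y, rfl⟩, by rw [← hassoc, hex], by rw [hassoc, hyf']⟩
  · -- decomposition
    intro e f e' f' he hf he' hf'
    ext t
    simp only [Set.mem_setOf_eq]
    constructor
    · intro ht
      obtain ⟨htp, het, htf'⟩ := (memZ e f' he hf' t).1 ht
      refine ⟨op t f, ?_, op e' f', ?_, ?_⟩
      · exact (memZ e f he hf _).2
          ⟨⟨t, f, rfl⟩, by rw [← hassoc, het], by rw [hassoc, hf]⟩
      · exact (memZ e' f' he' hf' _).2
          ⟨⟨e', f', rfl⟩, by rw [← hassoc, he'], by rw [hassoc, hf']⟩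
      · have sand : op (op e' f) e' = e' := Stmt15.sandwich hassoc hab hf he'
        have key : op e' (op (op f e') f') = op e' f' := by
          rw [← hassoc, ← hassoc, sand]
        have hv := L1 e' t _ _ key
        rw [htf'] at hv
        calc t = op t (op (op f e') f') := hv.symm
          _ = op (op t f) (op e' f') := by rw [hassoc t f, ← hassoc f e' f']
    · rintro ⟨x, hx, y, hy, rfl⟩
      obtain ⟨hxp, hex, hxf⟩ := (memZ e f he hf x).1 hx
      obtain ⟨hyp, he'y, hyf'⟩ := (memZ e' f' he' hf' y).1 hy
      exact (memZ e f' he hf' _).2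
        ⟨⟨x, y, rfl⟩, by rw [← hassoc, hex], by rw [hassoc, hyf']⟩
end

section
/- Let ⟨A,·⟩ be a semigroup satisfying condition (*). Then ⟨A,·⟩ is an Abelian algebra if and only if ⟨A,·⟩ is an inflation of a subsemigroup that is a rectangular band of Abelian groups, and the product of any two idempotents of A is an idempotent. -/
universe u

/-- The semigroup `⟨A, op⟩` is an inflation of the subsemigroup on `B ⊆ A`:
`B` is closed under `op` and there is a partition `{X b : b ∈ B}` of `A` with
`b ∈ X b` and `x·y = b·b'` whenever `x ∈ X b`, `y ∈ X b'`. -/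
def IsInflation {A : Type u} (op : A → A → A) (B : Set A) : Prop :=
  (∀ x ∈ B, ∀ y ∈ B, op x y ∈ B) ∧
  ∃ X : B → Set A,
    (∀ b : B, (b : A) ∈ X b) ∧
    (∀ a : A, ∃! b : B, a ∈ X b) ∧
    (∀ b b' : B, ∀ x ∈ X b, ∀ y ∈ X b', op x y = op (b : A) (b' : A))

/-- The set `T ⊆ A` equipped with `op` is a rectangular band of Abelian groups:
there is a partition `{P i l : i ∈ ι, l ∈ κ}` of `T` into nonempty subsets, each
closed under `op` and an Abelian group under `op`, with `P i l · P j m ⊆ P i m`. -/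
def IsRectBandOfAbelianGroupsOn {A : Type u} (op : A → A → A) (T : Set A) : Prop :=
  ∃ (ι κ : Type u) (P : ι → κ → Set A),
    (∀ (i : ι) (l : κ), (P i l).Nonempty ∧ P i l ⊆ T) ∧
    (∀ a ∈ T, ∃! p : ι × κ, a ∈ P p.1 p.2) ∧
    (∀ (i : ι) (l : κ), IsAbelianGroupOn op (P i l)) ∧
    (∀ (i j : ι) (l m : κ), ∀ x ∈ P i l, ∀ y ∈ P j m, op x y ∈ P i m)


section Aux
variable {A : Type u} {op : A → A → A}

theorem tcP1 (hab : IsAbelianGroupoid op) {u c d : A} (h : op u c = op u d) (v : A) :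
    op v c = op v d := by
  have h2 := hab 1 (.mul (.var 0) (.var 1)) u v (fun _ => c) (fun _ => d) (by
    simpa [GTerm.eval] using h)
  simpa [GTerm.eval] using h2

theorem tcP2 (hab : IsAbelianGroupoid op) {u c d : A} (h : op c u = op d u) (v : A) :
    op c v = op d v := by
  have h2 := hab 1 (.mul (.var 1) (.var 0)) u v (fun _ => c) (fun _ => d) (by
    simpa [GTerm.eval] using h)
  simpa [GTerm.eval] using h2

theorem tcP3 (hab : IsAbelianGroupoid op) {u c1 c2 d1 d2 : A}
    (h : op (op c1 u) c2 = op (op d1 u) d2) (v : A) :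
    op (op c1 v) c2 = op (op d1 v) d2 := by
  have h2 := hab 2 (.mul (.mul (.var 1) (.var 0)) (.var 2)) u v ![c1, c2] ![d1, d2] (by
    simpa [GTerm.eval] using h)
  simpa [GTerm.eval] using h2

section Idem
variable (hassoc : ∀ a b c : A, op (op a b) c = op a (op b c))
variable (hab : IsAbelianGroupoid op)
include hassoc hab

/-- v·(e·f) = v·f for idempotents e,f -/
theorem tcIDR {e f : A} (he : op e e = e) (hf : op f f = f) (v : A) :
    op v (op e f) = op v f := by
  have h : op e (op e f) = op e f := by rw [← hassoc, he]
  exact tcP1 hab h v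

/-- (e·f)·v = e·v for idempotents e,f -/
theorem tcIDL {e f : A} (he : op e e = e) (hf : op f f = f) (v : A) :
    op (op e f) v = op e v := by
  have h : op (op e f) f = op e f := by rw [hassoc, hf]
  exact tcP2 hab h v

/-- product of idempotents is idempotent -/
theorem tcIdProd {e f : A} (he : op e e = e) (hf : op f f = f) :
    op (op e f) (op e f) = op e f := by
  rw [tcIDR hassoc hab he hf (op e f), hassoc, hf]

/-- from s·x = s produce an idempotent right identity of s, which moreover
acts like x on the right of everything -/
theorem mkIdemR {s x : A} (hsx : op s x = s) :
    op (op x x) (op x x) = op x x ∧ op s (op x x) = s ∧ ∀ v, op v (op x x) = op v x := by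
  have h : op s (op x x) = op s x := by rw [← hassoc, hsx, hsx]
  have key : ∀ v, op v (op x x) = op v x := fun v => tcP1 hab h v
  refine ⟨?_, (key s).trans hsx, key⟩
  rw [key (op x x), hassoc, key x]

theorem mkIdemL {s y : A} (hys : op y s = s) :
    op (op y y) (op y y) = op y y ∧ op (op y y) s = s ∧ ∀ v, op (op y y) v = op y v := by
  have h : op (op y y) s = op y s := by rw [hassoc, hys, hys]
  have key : ∀ v, op (op y y) v = op y v := fun v => tcP2 hab h v
  refine ⟨?_, (key s).trans hys, key⟩
  rw [key (op y y), ← hassoc, key y]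

end Idem
def Hset (op : A → A → A) (e : A) : Set A :=
  {s | op s e = s ∧ op e s = s ∧ ∃ t, op t e = t ∧ op e t = t ∧ op s t = e ∧ op t s = e}

def Bset (op : A → A → A) : Set A := {s | ∃ e, op e e = e ∧ s ∈ Hset op e}

theorem groupify (hassoc : ∀ a b c : A, op (op a b) c = op a (op b c))
    {z g t₀ r₀ : A} (hgidem : op g g = g) (hgz : op g z = z) (hzg : op z g = z)
    (ht₀ : op z t₀ = g) (hr₀ : op r₀ z = g) : z ∈ Hset op g := by
  refine ⟨hzg, hgz, op (op g t₀) g, ?_, ?_, ?_, ?_⟩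
  · rw [hassoc (op g t₀) g g, hgidem]
  · rw [← hassoc g (op g t₀) g, ← hassoc g g t₀, hgidem]
  · -- op z ((g t₀) g) = g
    calc op z (op (op g t₀) g) = op (op z (op g t₀)) g := (hassoc _ _ _).symm
      _ = op (op (op z g) t₀) g := by rw [hassoc z g t₀]
      _ = op (op z t₀) g := by rw [hzg]
      _ = op g g := by rw [ht₀]
      _ = g := hgidem
  · -- op ((g t₀) g) z = g : via r = t trick
    have hrz : op (op (op g r₀) g) z = g := by
      calc op (op (op g r₀) g) z = op (op g r₀) (op g z) := hassoc _ _ _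
        _ = op (op g r₀) z := by rw [hgz]
        _ = op g (op r₀ z) := hassoc _ _ _
        _ = op g g := by rw [hr₀]
        _ = g := hgidem
    have hrg : op (op (op g r₀) g) g = op (op g r₀) g := by
      rw [hassoc (op g r₀) g g, hgidem]
    have hzt : op z (op (op g t₀) g) = g := by
      calc op z (op (op g t₀) g) = op (op z (op g t₀)) g := (hassoc _ _ _).symm
        _ = op (op (op z g) t₀) g := by rw [hassoc z g t₀]
        _ = op (op z t₀) g := by rw [hzg]
        _ = op g g := by rw [ht₀]
        _ = g := hgidem
    have hgt : op g (op (op g t₀) g) = op (op g t₀) g := by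
      rw [← hassoc g (op g t₀) g, ← hassoc g g t₀, hgidem]
    -- r = r g = r (z t) = (r z) t = g t = t
    have : op (op g r₀) g = op (op g t₀) g := by
      calc op (op g r₀) g = op (op (op g r₀) g) g := by rw [hassoc (op g r₀) g g, hgidem]
        _ = op (op (op g r₀) g) (op z (op (op g t₀) g)) := by rw [hzt]
        _ = op (op (op (op g r₀) g) z) (op (op g t₀) g) := (hassoc _ _ _).symm
        _ = op g (op (op g t₀) g) := by rw [hrz]
        _ = op (op g t₀) g := hgt
    rw [← this]; exact hrz

def pwr (op : A → A → A) (z : A) : ℕ → A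
  | 0 => z
  | n+1 => op z (pwr op z n)

theorem pwr_mem {z : A} (hz : z ∈ prodSet op) (n : ℕ) : pwr op z n ∈ prodSet op := by
  cases n with
  | zero => exact hz
  | succ n => exact ⟨z, pwr op z n, rfl⟩

theorem pwr_add (hassoc : ∀ a b c : A, op (op a b) c = op a (op b c)) (z : A) (m n : ℕ) :
    op (pwr op z m) (pwr op z n) = pwr op z (m + n + 1) := by
  induction m with
  | zero => rw [Nat.zero_add]; rfl
  | succ m ih =>
      have h1 : pwr op z (m + 1) = op z (pwr op z m) := rfl
      have h2 : pwr op z (m + 1 + n + 1) = op z (pwr op z (m + n + 1)) := by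
        rw [show m + 1 + n + 1 = (m + n + 1) + 1 by omega]
        rfl
      rw [h1, h2, hassoc, ih]

section Main
variable (hassoc : ∀ a b c : A, op (op a b) c = op a (op b c))
variable (hab : IsAbelianGroupoid op)
include hassoc hab

/-- every product lies in B: case (*)-identities -/
theorem memB_star
    (hst : ∀ b c : A, {z : A | ∃ x : A, z = op (op b c) x} = {z : A | ∃ x : A, z = op b x} ∧
              {z : A | ∃ x : A, z = op x (op b c)} = {z : A | ∃ x : A, z = op x c})
    (a b : A) : op a b ∈ Bset op := by
  obtain ⟨x₀, hx₀⟩ : ∃ x, op a b = op (op a b) x :=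
    (Set.ext_iff.mp (hst a b).1 (op a b)).mpr ⟨b, rfl⟩
  obtain ⟨y₀, hy₀⟩ : ∃ x, op a b = op x (op a b) :=
    (Set.ext_iff.mp (hst a b).2 (op a b)).mpr ⟨a, rfl⟩
  obtain ⟨hE, hzE, hEv⟩ := mkIdemR hassoc hab hx₀.symm
  obtain ⟨hF, hFz, hFv⟩ := mkIdemL hassoc hab hy₀.symm
  have hgidem := tcIdProd hassoc hab hF hE
  have hgz : op (op (op y₀ y₀) (op x₀ x₀)) (op a b) = op a b := by
    rw [tcIDL hassoc hab hF hE]; exact hFz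
  have hzg : op (op a b) (op (op y₀ y₀) (op x₀ x₀)) = op a b := by
    rw [tcIDR hassoc hab hF hE]; exact hzE
  have ht₀ : ∃ t, op (op a b) t = op (op y₀ y₀) (op x₀ x₀) := by
    have hyz := (hst y₀ (op a b)).1
    rw [← hy₀] at hyz
    obtain ⟨t, ht⟩ := (Set.ext_iff.mp hyz (op (op y₀ y₀) (op x₀ x₀))).mpr
      ⟨op y₀ (op x₀ x₀), hassoc y₀ y₀ (op x₀ x₀)⟩
    exact ⟨t, ht.symm⟩
  have hr₀ : ∃ r, op r (op a b) = op (op y₀ y₀) (op x₀ x₀) := by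
    have hzx := (hst (op a b) x₀).2
    rw [← hx₀] at hzx
    obtain ⟨t, ht⟩ := (Set.ext_iff.mp hzx (op (op y₀ y₀) (op x₀ x₀))).mpr
      ⟨op (op y₀ y₀) x₀, (hassoc (op y₀ y₀) x₀ x₀).symm⟩
    exact ⟨t, ht.symm⟩
  obtain ⟨t₀, ht₀⟩ := ht₀
  obtain ⟨r₀, hr₀⟩ := hr₀
  exact ⟨_, hgidem, groupify hassoc hgidem hgz hzg ht₀ hr₀⟩

/-- the period identity z = z^{d+2} -/
theorem z_period {a b : A} {m d : ℕ}
    (h : pwr op (op a b) m = pwr op (op a b) (m + d + 1)) :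
    op a b = pwr op (op a b) (d + 1) := by
  have h1 : op (op a b) (pwr op (op a b) m) = op (op a b) (pwr op (op a b) (m + d + 1)) :=
    congrArg _ h
  have key : op a (op b (pwr op (op a b) m))
      = op (op (pwr op (op a b) d) a) (op b (pwr op (op a b) m)) := by
    calc op a (op b (pwr op (op a b) m))
        = op (op a b) (pwr op (op a b) m) := (hassoc _ _ _).symm
      _ = op (op a b) (pwr op (op a b) (m + d + 1)) := h1
      _ = pwr op (op a b) (m + d + 2) := rfl
      _ = pwr op (op a b) (d + (m + 1) + 1) := by rw [show d + (m+1) + 1 = m + d + 2 by omega]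
      _ = op (pwr op (op a b) d) (pwr op (op a b) (m+1)) := (pwr_add hassoc _ _ _).symm
      _ = op (pwr op (op a b) d) (op (op a b) (pwr op (op a b) m)) := rfl
      _ = op (pwr op (op a b) d) (op a (op b (pwr op (op a b) m))) := by rw [hassoc a b]
      _ = op (op (pwr op (op a b) d) a) (op b (pwr op (op a b) m)) := (hassoc _ _ _).symm
  have h2 := tcP2 hab key b
  calc op a b = op (op (pwr op (op a b) d) a) b := h2
    _ = op (pwr op (op a b) d) (op a b) := hassoc _ _ _
    _ = op (pwr op (op a b) d) (pwr op (op a b) 0) := rfl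
    _ = pwr op (op a b) (d + 0 + 1) := pwr_add hassoc _ _ _
    _ = pwr op (op a b) (d + 1) := by rw [show d + 0 + 1 = d + 1 by omega]

omit hassoc hab in
theorem pwr_shift {z : A} {d : ℕ} (hp : z = pwr op z (d + 1)) :
    ∀ j, pwr op z (j + (d + 1)) = pwr op z j := by
  intro j
  induction j with
  | zero => rw [Nat.zero_add]; exact hp.symm
  | succ j ih =>
      have : pwr op z (j + 1 + (d+1)) = op z (pwr op z (j + (d+1))) := by
        rw [show j + 1 + (d+1) = (j + (d+1)) + 1 by omega]; rfl
      rw [this, ih]; rfl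

/-- every product lies in B: finite case -/
theorem memB_fin (hfin : (prodSet op).Finite) (a b : A) : op a b ∈ Bset op := by
  have hzP : op a b ∈ prodSet op := ⟨a, b, rfl⟩
  haveI : Finite ↥(prodSet op) := hfin.to_subtype
  obtain ⟨m, n, hmn, heq⟩ := Finite.exists_ne_map_eq_of_infinite
    (fun n : ℕ => (⟨pwr op (op a b) n, pwr_mem hzP n⟩ : ↥(prodSet op)))
  have heq' : pwr op (op a b) m = pwr op (op a b) n := congrArg Subtype.val heq
  have hper : ∃ d : ℕ, op a b = pwr op (op a b) (d + 1) := by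
    rcases Nat.lt_or_ge m n with hlt | hge
    · exact ⟨n - m - 1, z_period hassoc hab
        (by rw [show m + (n - m - 1) + 1 = n by omega] at *; exact heq')⟩
    · have hlt2 : n < m := by omega
      exact ⟨m - n - 1, z_period hassoc hab
        (by rw [show n + (m - n - 1) + 1 = m by omega]; exact heq'.symm)⟩
  obtain ⟨d, hp⟩ := hper
  have hshift := pwr_shift (op := op) hp
  have hgidem : op (pwr op (op a b) d) (pwr op (op a b) d) = pwr op (op a b) d := by
    rw [pwr_add hassoc, show d + d + 1 = d + (d+1) by omega, hshift d]
  have hgz : op (pwr op (op a b) d) (op a b) = op a b := by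
    calc op (pwr op (op a b) d) (op a b)
        = op (pwr op (op a b) d) (pwr op (op a b) 0) := rfl
      _ = pwr op (op a b) (d + 0 + 1) := pwr_add hassoc _ _ _
      _ = pwr op (op a b) (d + 1) := by rw [show d + 0 + 1 = d + 1 by omega]
      _ = op a b := hp.symm
  have hzg : op (op a b) (pwr op (op a b) d) = op a b := by
    calc op (op a b) (pwr op (op a b) d) = pwr op (op a b) (d + 1) := rfl
      _ = op a b := hp.symm
  have ht₀ : op (op a b) (pwr op (op a b) (2*d)) = pwr op (op a b) d := by
    calc op (op a b) (pwr op (op a b) (2*d)) = pwr op (op a b) (2*d + 1) := rfl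
      _ = pwr op (op a b) (d + (d + 1)) := by rw [show d + (d+1) = 2*d + 1 by omega]
      _ = pwr op (op a b) d := hshift d
  have hr₀ : op (pwr op (op a b) (2*d)) (op a b) = pwr op (op a b) d := by
    calc op (pwr op (op a b) (2*d)) (op a b)
        = op (pwr op (op a b) (2*d)) (pwr op (op a b) 0) := rfl
      _ = pwr op (op a b) (2*d + 0 + 1) := pwr_add hassoc _ _ _
      _ = pwr op (op a b) (d + (d + 1)) := by rw [show d + (d+1) = 2*d + 0 + 1 by omega]
      _ = pwr op (op a b) d := hshift d
  exact ⟨_, hgidem, groupify hassoc hgidem hgz hzg ht₀ hr₀⟩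

end Main

section Main2
variable (hassoc : ∀ a b c : A, op (op a b) c = op a (op b c))
variable (hab : IsAbelianGroupoid op)
include hassoc hab

/-- uniqueness: two equivalent elements with two-sided idempotent identities coincide -/
theorem unique_shadow {s s' g g' : A} (hg : op g g = g) (hg' : op g' g' = g')
    (hsg : op s g = s) (hgs : op g s = s) (hs'g' : op s' g' = s') (hg's' : op g' s' = s')
    (hequiv : ∀ v, op v s = op v s' ∧ op s v = op s' v) : s = s' := by
  -- basic transported identities
  have hsg' : op s g' = s' := by rw [(hequiv g').2]; exact hs'g'
  have hg's : op g' s = s' := by rw [(hequiv g').1]; exact hg's'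
  have hs'g : op s' g = s := by rw [← (hequiv g).2]; exact hsg
  have hgs' : op g s' = s := by rw [← (hequiv g).1]; exact hgs
  -- first P3 : from (g' s) g = s = (g s) g
  have e1 : op (op g' s) g = op (op g s) g := by rw [hg's, hgs, hs'g, hsg]
  have k1 := tcP3 hab e1 g
  -- gives  (g' g) g = (g g) g  ⇒ g' g = g
  have hg'g : op g' g = g := by
    have h5 : op g' (op g g) = op g (op g g) := by
      rw [← hassoc, ← hassoc]; exact k1
    rw [hg] at h5; rw [hg] at h5; exact h5
  -- second P3 : from (g' s) g' = s' = (g s) g'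
  have e2 : op (op g' s) g' = op (op g s) g' := by rw [hg's, hgs, hs'g', hsg']
  have k2 := tcP3 hab e2 g'
  have hgg' : op g g' = g' := by
    have h5 : op g' (op g' g') = op g (op g' g') := by
      rw [← hassoc, ← hassoc]; exact k2
    rw [hg'] at h5; rw [hg'] at h5; exact h5.symm
  -- s' = g' s = (g g') s = g s = s
  symm
  calc s' = op g' s := hg's.symm
    _ = op (op g g') s := by rw [hgg']
    _ = op g s := tcIDL hassoc hab hg hg' s
    _ = s := hgs

/-- every element has a shadow in B -/
theorem shadow_exists (hC : ∀ x y : A, op x y ∈ Bset op) (a : A) :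
    ∃ s, s ∈ Bset op ∧ (∀ v, op v a = op v s) ∧ (∀ v, op a v = op s v) := by
  obtain ⟨e, he, hsq⟩ := hC a a
  refine ⟨op e a, hC e a, ?_, ?_⟩
  · intro v
    have h : op e (op e a) = op e a := by rw [← hassoc, he]
    exact (tcP1 hab h v).symm
  · intro v
    have h : op (op e a) a = op a a := by rw [hassoc]; exact hsq.2.1
    exact (tcP2 hab h v).symm

/-- an element of two H-classes forces equal idempotents -/
theorem idem_identity_unique {a k k' : A} (hk : op k k = k) (hk' : op k' k' = k')
    (h1 : op a k = a) (h2 : op k a = a) (h3 : op a k' = a) (h4 : op k' a = a) : k = k' := by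
  have hv := tcP1 hab (h1.trans h3.symm)
  have hw := tcP2 hab (h2.trans h4.symm)
  calc k = op k k := hk.symm
    _ = op k k' := hv k
    _ = op k' k' := hw k'
    _ = k' := hk'
end Main2

section Main3
variable (hassoc : ∀ a b c : A, op (op a b) c = op a (op b c))
variable (hab : IsAbelianGroupoid op)
include hassoc hab

theorem absorbMid {x t g h : A} (hg : op g g = g) (hh : op h h = h)
    (hxg : op x g = x) (hgt : op g t = t) : op x (op h t) = op x t := by
  calc op x (op h t)
      = op (op x g) (op h t) := by rw [hxg]
    _ = op x (op g (op h t)) := hassoc _ _ _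
    _ = op x (op (op g h) t) := by rw [← hassoc g h t]
    _ = op x (op (op g h) (op g t)) := by rw [hgt]
    _ = op x (op g (op g t)) := by rw [tcIDL hassoc hab hg hh (op g t)]
    _ = op x (op (op g g) t) := by rw [← hassoc g g t]
    _ = op x (op g t) := by rw [hg]
    _ = op x t := by rw [hgt]

theorem absorbMid' {y t' g h : A} (hg : op g g = g) (hh : op h h = h)
    (ht'h : op t' h = t') (hhy : op h y = y) : op t' (op g y) = op t' y := by
  calc op t' (op g y)
      = op (op t' h) (op g y) := by rw [ht'h]
    _ = op t' (op h (op g y)) := hassoc _ _ _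
    _ = op t' (op (op h g) y) := by rw [← hassoc h g y]
    _ = op t' (op (op h g) (op h y)) := by rw [hhy]
    _ = op t' (op h (op h y)) := by rw [tcIDL hassoc hab hh hg (op h y)]
    _ = op t' (op (op h h) y) := by rw [← hassoc h h y]
    _ = op t' (op h y) := by rw [hh]
    _ = op t' y := by rw [hhy]

theorem hset_prod {x y g h : A} (hg : op g g = g) (hh : op h h = h)
    (hx : x ∈ Hset op g) (hy : y ∈ Hset op h) : op x y ∈ Hset op (op g h) := by
  obtain ⟨hxg, hgx, t, htg, hgt, hxt, htx⟩ := hx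
  obtain ⟨hyh, hhy, t', ht'h, hht', hyt', ht'y⟩ := hy
  have hkk : op (op g h) (op g h) = op g h := tcIdProd hassoc hab hg hh
  have f1 : op (op x y) (op g h) = op x y := by
    rw [tcIDR hassoc hab hg hh (op x y), hassoc, hyh]
  have f2 : op (op g h) (op x y) = op x y := by
    rw [tcIDL hassoc hab hg hh (op x y), ← hassoc, hgx]
  refine ⟨f1, f2, op (op (op g h) (op t' t)) (op g h), ?_, ?_, ?_, ?_⟩
  · rw [hassoc (op (op g h) (op t' t)) (op g h) (op g h), hkk]
  · calc op (op g h) (op (op (op g h) (op t' t)) (op g h))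
        = op (op (op g h) (op (op g h) (op t' t))) (op g h) := (hassoc _ _ _).symm
      _ = op (op (op (op g h) (op g h)) (op t' t)) (op g h) := by
            rw [hassoc (op g h) (op g h) (op t' t)]
      _ = op (op (op g h) (op t' t)) (op g h) := by rw [hkk]
  · -- (xy) w = k
    have inner2 : op (op x y) (op t' t) = g := by
      calc op (op x y) (op t' t)
          = op x (op y (op t' t)) := hassoc _ _ _
        _ = op x (op (op y t') t) := by rw [← hassoc y t' t]
        _ = op x (op h t) := by rw [hyt']
        _ = op x t := absorbMid hassoc hab hg hh hxg hgt
        _ = g := hxt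
    calc op (op x y) (op (op (op g h) (op t' t)) (op g h))
        = op (op (op x y) (op (op g h) (op t' t))) (op g h) := (hassoc _ _ _).symm
      _ = op (op (op (op x y) (op g h)) (op t' t)) (op g h) := by
            rw [hassoc (op x y) (op g h) (op t' t)]
      _ = op (op (op x y) (op t' t)) (op g h) := by rw [f1]
      _ = op g (op g h) := by rw [inner2]
      _ = op (op g g) h := (hassoc _ _ _).symm
      _ = op g h := by rw [hg]
  · -- w (xy) = k
    have inner2 : op (op t' t) (op x y) = h := by
      calc op (op t' t) (op x y)
          = op t' (op t (op x y)) := hassoc _ _ _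
        _ = op t' (op (op t x) y) := by rw [← hassoc t x y]
        _ = op t' (op g y) := by rw [htx]
        _ = op t' y := absorbMid' hassoc hab hg hh ht'h hhy
        _ = h := ht'y
    calc op (op (op (op g h) (op t' t)) (op g h)) (op x y)
        = op (op (op g h) (op t' t)) (op (op g h) (op x y)) := hassoc _ _ _
      _ = op (op (op g h) (op t' t)) (op x y) := by rw [f2]
      _ = op (op g h) (op (op t' t) (op x y)) := hassoc _ _ _
      _ = op (op g h) h := by rw [inner2]
      _ = op g (op h h) := hassoc _ _ _
      _ = op g h := by rw [hh]

theorem comm_in_H {x y g : A} (hg : op g g = g)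
    (hx : x ∈ Hset op g) (hy : y ∈ Hset op g) : op x y = op y x := by
  obtain ⟨hxg, hgx, t, htg, hgt, hxt, htx⟩ := hx
  obtain ⟨hyg, hgy, t', ht'g, hgt', hyt', ht'y⟩ := hy
  have e : op (op t x) g = op (op g x) t := by
    rw [htx, hg, hgx, hxt]
  have k := tcP3 hab e y
  -- k : op (op t y) g = op (op g y) t
  have hcommt : op t y = op y t := by
    calc op t y = op t (op y g) := by rw [hyg]
      _ = op (op t y) g := (hassoc _ _ _).symm
      _ = op (op g y) t := k
      _ = op y t := by rw [hgy]
  symm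
  calc op y x = op (op g y) x := by rw [hgy]
    _ = op (op (op x t) y) x := by rw [hxt]
    _ = op (op x (op t y)) x := by rw [hassoc x t y]
    _ = op (op x (op y t)) x := by rw [hcommt]
    _ = op (op (op x y) t) x := by rw [← hassoc x y t]
    _ = op (op x y) (op t x) := hassoc _ _ _
    _ = op (op x y) g := by rw [htx]
    _ = op x (op y g) := hassoc _ _ _
    _ = op x y := by rw [hyg]

theorem HisGroup {g : A} (hg : op g g = g) : IsAbelianGroupOn op (Hset op g) := by
  constructor
  · intro x hx y hy
    have := hset_prod hassoc hab hg hg hx hy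
    rwa [hg] at this
  · refine ⟨g, ⟨hg, hg, g, hg, hg, hg, hg⟩, fun x hx => ⟨hx.2.1, hx.1⟩, ?_, ?_⟩
    · rintro x ⟨hxg, hgx, t, htg, hgt, hxt, htx⟩
      exact ⟨t, ⟨htg, hgt, x, hxg, hgx, htx, hxt⟩, hxt⟩
    · intro x hx y hy
      exact comm_in_H hassoc hab hg hx hy

theorem wd_lemma {e e' f f' : A} (he : op e e = e) (he' : op e' e' = e')
    (hf : op f f = f) (hf' : op f' f' = f')
    (hrow1 : op e e' = e') (hcol1 : op f f' = f) : op e f = op e' f' := by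
  have h1 : op e' f' = op e f' := by rw [← hrow1, tcIDL hassoc hab he he' f']
  have h2 : op e f' = op e f := by rw [← tcIDR hassoc hab hf hf' e, hcol1]
  exact (h2.symm.trans h1.symm)

end Main3

def rowStd (op : A → A → A) (hassoc : ∀ a b c : A, op (op a b) c = op a (op b c)) :
    Setoid {e : A // op e e = e} :=
  ⟨fun e f => op e.1 f.1 = f.1 ∧ op f.1 e.1 = e.1,
    ⟨fun e => ⟨e.2, e.2⟩, fun h => ⟨h.2, h.1⟩,
     fun {a b c} h1 h2 => ⟨by rw [← h2.1, ← hassoc, h1.1], by rw [← h1.2, ← hassoc, h2.2]⟩⟩⟩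

def colStd (op : A → A → A) (hassoc : ∀ a b c : A, op (op a b) c = op a (op b c)) :
    Setoid {e : A // op e e = e} :=
  ⟨fun e f => op e.1 f.1 = e.1 ∧ op f.1 e.1 = f.1,
    ⟨fun e => ⟨e.2, e.2⟩, fun h => ⟨h.2, h.1⟩,
     fun {a b c} h1 h2 => ⟨by rw [← h1.1, hassoc, h2.1], by rw [← h2.2, hassoc, h1.2]⟩⟩⟩

theorem forward_dir (hassoc : ∀ a b c : A, op (op a b) c = op a (op b c))
    (hstar : CondStar op) (hab : IsAbelianGroupoid op) :
    (∃ T : Set A, IsInflation op T ∧ IsRectBandOfAbelianGroupsOn op T) ∧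
      (∀ e f : A, op e e = e → op f f = f → op (op e f) (op e f) = op e f) := by
  have hC : ∀ x y : A, op x y ∈ Bset op := by
    rcases hstar with h | h
    · exact memB_star hassoc hab h
    · exact memB_fin hassoc hab h
  refine ⟨⟨Bset op, ?_, ?_⟩, fun e f he hf => tcIdProd hassoc hab he hf⟩
  · -- IsInflation
    refine ⟨fun x _ y _ => hC x y,
      fun b => {a | ∀ v, op v a = op v b.1 ∧ op a v = op b.1 v}, ?_, ?_, ?_⟩
    · intro b v; exact ⟨rfl, rfl⟩
    · intro a
      obtain ⟨s, hsB, h1, h2⟩ := shadow_exists hassoc hab hC a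
      refine ⟨⟨s, hsB⟩, fun v => ⟨h1 v, h2 v⟩, ?_⟩
      rintro ⟨s', hs'B⟩ hmem
      obtain ⟨g', hg', hs'⟩ := hs'B
      obtain ⟨g, hg, hs⟩ := hsB
      have hequiv : ∀ v, op v s' = op v s ∧ op s' v = op s v := fun v =>
        ⟨(hmem v).1.symm.trans (h1 v), (hmem v).2.symm.trans (h2 v)⟩
      exact Subtype.ext
        (unique_shadow hassoc hab hg' hg hs'.1 hs'.2.1 hs.1 hs.2.1 hequiv)
    · rintro ⟨b, hb⟩ ⟨b', hb'⟩ x hx y hy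
      exact ((hx y).2).trans ((hy b).1)
  · -- rect band of abelian groups
    refine ⟨Quotient (rowStd op hassoc), Quotient (colStd op hassoc),
      Quotient.lift₂ (fun e f => Hset op (op e.1 f.1)) ?_, ?_, ?_, ?_, ?_⟩
    · -- well-definedness
      rintro e f e' f' ⟨hr1, hr2⟩ ⟨hc1, hc2⟩
      exact congrArg (Hset op)
        (wd_lemma hassoc hab e.2 e'.2 f.2 f'.2 hr1 hc1)
    · -- nonempty and contained in B
      intro i l
      induction i using Quotient.inductionOn with | _ e => ?_
      induction l using Quotient.inductionOn with | _ f => ?_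
      have hk : op (op e.1 f.1) (op e.1 f.1) = op e.1 f.1 := tcIdProd hassoc hab e.2 f.2
      constructor
      · exact ⟨op e.1 f.1, ⟨hk, hk, op e.1 f.1, hk, hk, hk, hk⟩⟩
      · exact fun s hs => ⟨op e.1 f.1, hk, hs⟩
    · -- unique block
      rintro a ⟨e, he, haH⟩
      refine ⟨(⟦⟨e, he⟩⟧, ⟦⟨e, he⟩⟧), ?_, ?_⟩
      · show a ∈ Hset op (op e e)
        rw [he]; exact haH
      · rintro ⟨i, l⟩ hp
        obtain ⟨e', rfl⟩ := Quotient.exists_rep i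
        obtain ⟨f', rfl⟩ := Quotient.exists_rep l
        have hp' : a ∈ Hset op (op e'.1 f'.1) := hp
        have hk' : op (op e'.1 f'.1) (op e'.1 f'.1) = op e'.1 f'.1 :=
          tcIdProd hassoc hab e'.2 f'.2
        have hek : e = op e'.1 f'.1 :=
          idem_identity_unique hassoc hab he hk' haH.1 haH.2.1 hp'.1 hp'.2.1
        have hrow : op e'.1 e = e ∧ op e e'.1 = e'.1 := by
          constructor
          · rw [hek, ← hassoc, e'.2]
          · rw [hek, tcIDL hassoc hab e'.2 f'.2, e'.2]
        have hcol : op f'.1 e = f'.1 ∧ op e f'.1 = e := by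
          constructor
          · rw [hek, tcIDR hassoc hab e'.2 f'.2, f'.2]
          · rw [hek, hassoc, f'.2]
        refine Prod.ext ?_ ?_
        · exact Quotient.sound ⟨hrow.1, hrow.2⟩
        · exact Quotient.sound ⟨hcol.1, hcol.2⟩
    · -- groups
      intro i l
      induction i using Quotient.inductionOn with | _ e => ?_
      induction l using Quotient.inductionOn with | _ f => ?_
      exact HisGroup hassoc hab (tcIdProd hassoc hab e.2 f.2)
    · -- product rule
      intro i j l m x hx y hy
      obtain ⟨e, rfl⟩ := Quotient.exists_rep i
      obtain ⟨e₁, rfl⟩ := Quotient.exists_rep j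
      obtain ⟨f, rfl⟩ := Quotient.exists_rep l
      obtain ⟨f₁, rfl⟩ := Quotient.exists_rep m
      have hx' : x ∈ Hset op (op e.1 f.1) := hx
      have hy' : y ∈ Hset op (op e₁.1 f₁.1) := hy
      have h := hset_prod hassoc hab (tcIdProd hassoc hab e.2 f.2)
        (tcIdProd hassoc hab e₁.2 f₁.2) hx' hy'
      have key : op (op e.1 f.1) (op e₁.1 f₁.1) = op e.1 f₁.1 := by
        rw [tcIDR hassoc hab e₁.2 f₁.2, tcIDL hassoc hab e.2 f.2]
      show op x y ∈ Hset op (op e.1 f₁.1)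
      rwa [key] at h

def kcount {n : ℕ} : GTerm A (n + 1) → ℕ
  | .var i => if i = 0 then 1 else 0
  | .const _ => 0
  | .mul s t => kcount s + kcount t

def firstLeaf {n : ℕ} : GTerm A n → A ⊕ Fin n
  | .var i => .inr i
  | .const a => .inl a
  | .mul s _ => firstLeaf s

def lastLeaf {n : ℕ} : GTerm A n → A ⊕ Fin n
  | .var i => .inr i
  | .const a => .inl a
  | .mul _ t => lastLeaf t

def repop (op : A → A → A) (x : A) : ℕ → A → A
  | 0, a => a
  | n+1, a => op x (repop op x n a)

theorem backward_dir (hassoc : ∀ a b c : A, op (op a b) c = op a (op b c))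
    (h : (∃ T : Set A, IsInflation op T ∧ IsRectBandOfAbelianGroupsOn op T) ∧
      (∀ e f : A, op e e = e → op f f = f → op (op e f) (op e f) = op e f)) :
    IsAbelianGroupoid op := by
  classical
  obtain ⟨⟨T, ⟨hBcl, X, hXself, hXuniq, hXprod⟩, ⟨ι, κ, P, hPne, hPuniq, hPgrp, hPmul⟩⟩,
    hidem⟩ := h
  intro n t u v c d heq
  rcases isEmpty_or_nonempty A with hemp | hne
  · exact hemp.elim u
  -- shadow map
  choose σf hσ1 hσ2 using hXuniq
  have hσmem : ∀ a : A, (σf a).1 ∈ T := fun a => (σf a).2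
  have hσT : ∀ (z : A) (hz : z ∈ T), (σf z).1 = z := fun z hz =>
    congrArg Subtype.val (hσ2 z ⟨z, hz⟩ (hXself ⟨z, hz⟩)).symm
  have hmulσ : ∀ x y : A, op x y = op (σf x).1 (σf y).1 := fun x y =>
    hXprod (σf x) (σf y) x (hσ1 x) y (hσ1 y)
  have hmulT : ∀ x y : A, op x y ∈ T := fun x y => by
    rw [hmulσ]; exact hBcl _ (hσmem x) _ (hσmem y)
  -- block map
  choose pk hpk hpku using fun a : T => hPuniq a.1 a.2
  choose idE idEmem idEid idEinv idEcomm using fun (i : ι) (l : κ) => (hPgrp i l).2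
  have idEidem : ∀ i l, op (idE i l) (idE i l) = idE i l := fun i l =>
    (idEid i l _ (idEmem i l)).1
  have uniqIdem : ∀ i l z, z ∈ P i l → op z z = z → z = idE i l := by
    intro i l z hz hzz
    obtain ⟨y, hy, hzy⟩ := idEinv i l z hz
    calc z = op z (idE i l) := ((idEid i l z hz).2).symm
      _ = op z (op z y) := by rw [hzy]
      _ = op (op z z) y := (hassoc _ _ _).symm
      _ = op z y := by rw [hzz]
      _ = idE i l := hzy
  have rAbsorb : ∀ {i l j : _} {x e : A}, x ∈ P i l → e ∈ P j l → op e e = e →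
      op x e = x := by
    intro i l j x e hx he hee
    have h1 : op (idE i l) e ∈ P i l := hPmul i j l l _ (idEmem i l) e he
    have h2 : op (idE i l) e = idE i l := uniqIdem i l _ h1 (hidem _ _ (idEidem i l) hee)
    calc op x e = op (op x (idE i l)) e := by rw [(idEid i l x hx).2]
      _ = op x (op (idE i l) e) := hassoc _ _ _
      _ = op x (idE i l) := by rw [h2]
      _ = x := (idEid i l x hx).2
  have lAbsorb : ∀ {i m s : _} {e y : A}, e ∈ P i s → y ∈ P i m → op e e = e →
      op e y = y := by
    intro i m s e y he hy hee
    have h1 : op e (idE i m) ∈ P i m := hPmul i i s m e he _ (idEmem i m)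
    have h2 : op e (idE i m) = idE i m := uniqIdem i m _ h1 (hidem _ _ hee (idEidem i m))
    calc op e y = op e (op (idE i m) y) := by rw [(idEid i m y hy).1]
      _ = op (op e (idE i m)) y := (hassoc _ _ _).symm
      _ = op (idE i m) y := by rw [h2]
      _ = y := (idEid i m y hy).1
  have midE : ∀ {i l j m r s : _} {x y e : A}, x ∈ P i l → y ∈ P j m → e ∈ P r s →
      op e e = e → op (op x e) y = op x y := by
    intro i l j m r s x y e hx hy he hee
    have hef : op e (idE j l) ∈ P r l := hPmul r j s l e he _ (idEmem j l)
    have hefI : op (op e (idE j l)) (op e (idE j l)) = op e (idE j l) :=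
      hidem _ _ hee (idEidem j l)
    calc op (op x e) y
        = op (op x e) (op (idE j l) y) := by rw [lAbsorb (idEmem j l) hy (idEidem j l)]
      _ = op x (op e (op (idE j l) y)) := hassoc _ _ _
      _ = op x (op (op e (idE j l)) y) := by rw [hassoc e (idE j l) y]
      _ = op (op x (op e (idE j l))) y := (hassoc _ _ _).symm
      _ = op x y := by rw [rAbsorb hx hef hefI]
  -- base point and φ
  obtain ⟨a₀⟩ := hne
  obtain ⟨i0, l0⟩ := pk (σf a₀)
  obtain ⟨e₀, he₀, he₀id, he₀inv, he₀comm⟩ :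
      ∃ e, e ∈ P i0 l0 ∧ (∀ x ∈ P i0 l0, op e x = x ∧ op x e = x) ∧
        (∀ x ∈ P i0 l0, ∃ y ∈ P i0 l0, op x y = e) ∧
        (∀ x ∈ P i0 l0, ∀ y ∈ P i0 l0, op x y = op y x) :=
    ⟨idE i0 l0, idEmem i0 l0, idEid i0 l0, idEinv i0 l0, idEcomm i0 l0⟩
  have he₀e : op e₀ e₀ = e₀ := (he₀id e₀ he₀).1
  have he₀T : e₀ ∈ T := (hPne i0 l0).2 he₀
  obtain ⟨φ, hφ⟩ : ∃ φ : A → A, ∀ a, φ a = op (op e₀ a) e₀ := ⟨_, fun _ => rfl⟩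
  have he₀x : ∀ a : A, op e₀ a = op e₀ (σf a).1 := fun a => by
    rw [hmulσ e₀ a, hσT _ he₀T]
  have hxe₀ : ∀ a : A, op a e₀ = op (σf a).1 e₀ := fun a => by
    rw [hmulσ a e₀, hσT _ he₀T]
  have hφmem : ∀ a, φ a ∈ P i0 l0 := by
    intro a
    rw [hφ, he₀x a]
    exact hPmul i0 i0 (pk (σf a)).2 l0 _
      (hPmul i0 (pk (σf a)).1 l0 (pk (σf a)).2 _ he₀ _ (hpk (σf a))) _ he₀
  have hom : ∀ x y, φ (op x y) = op (φ x) (φ y) := by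
    intro x y
    have hU : op e₀ (σf x).1 ∈ P i0 (pk (σf x)).2 :=
      hPmul i0 (pk (σf x)).1 l0 (pk (σf x)).2 _ he₀ _ (hpk (σf x))
    have hV : op (σf y).1 e₀ ∈ P (pk (σf y)).1 l0 :=
      hPmul (pk (σf y)).1 i0 (pk (σf y)).2 l0 _ (hpk (σf y)) _ he₀
    have key : op (φ x) (φ y) = φ (op x y) := by
      rw [hφ, hφ, hφ]
      calc op (op (op e₀ x) e₀) (op (op e₀ y) e₀)
          = op (op (op e₀ (σf x).1) e₀) (op (op e₀ (σf y).1) e₀) := by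
            rw [he₀x x, he₀x y]
        _ = op (op (op e₀ (σf x).1) e₀) (op e₀ (op (σf y).1 e₀)) := by
            rw [hassoc e₀ (σf y).1 e₀]
        _ = op (op e₀ (σf x).1) (op e₀ (op e₀ (op (σf y).1 e₀))) := hassoc _ _ _
        _ = op (op e₀ (σf x).1) (op (op e₀ e₀) (op (σf y).1 e₀)) := by
            rw [hassoc e₀ e₀ (op (σf y).1 e₀)]
        _ = op (op e₀ (σf x).1) (op e₀ (op (σf y).1 e₀)) := by rw [he₀e]
        _ = op (op (op e₀ (σf x).1) e₀) (op (σf y).1 e₀) := (hassoc _ _ _).symm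
        _ = op (op e₀ (σf x).1) (op (σf y).1 e₀) := midE hU hV he₀ he₀e
        _ = op e₀ (op (σf x).1 (op (σf y).1 e₀)) := hassoc _ _ _
        _ = op e₀ (op (op (σf x).1 (σf y).1) e₀) := by rw [hassoc (σf x).1 (σf y).1 e₀]
        _ = op (op e₀ (op (σf x).1 (σf y).1)) e₀ := (hassoc _ _ _).symm
        _ = op (op e₀ (op x y)) e₀ := by rw [← hmulσ]
    exact key.symm
  -- reconstruction
  have hrec : ∀ {i l : _} {z z' : A}, z ∈ P i l → z' ∈ P i l → φ z = φ z' → z = z' := by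
    intro i l z z' hz hz' hphi
    have key : ∀ w, w ∈ P i l → op (op (idE i l) (φ w)) (idE i l) = w := by
      intro w hw
      have hfE : op (idE i l) e₀ ∈ P i l0 := hPmul i i0 l l0 _ (idEmem i l) _ he₀
      have hwe : op w e₀ ∈ P i l0 := hPmul i i0 l l0 w hw _ he₀
      calc op (op (idE i l) (φ w)) (idE i l)
          = op (op (idE i l) (op (op e₀ w) e₀)) (idE i l) := by rw [hφ]
        _ = op (op (op (idE i l) (op e₀ w)) e₀) (idE i l) := by
            rw [hassoc (idE i l) (op e₀ w) e₀]
        _ = op (op (op (op (idE i l) e₀) w) e₀) (idE i l) := by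
            rw [hassoc (idE i l) e₀ w]
        _ = op (op (op (idE i l) w) e₀) (idE i l) := by
            rw [midE (idEmem i l) hw he₀ he₀e]
        _ = op (op w e₀) (idE i l) := by rw [(idEid i l w hw).1]
        _ = op w (idE i l) := midE hw (idEmem i l) he₀ he₀e
        _ = w := (idEid i l w hw).2
    rw [← key z hz, ← key z' hz', hphi]
  -- rep arithmetic in the group P i0 l0
  have repMem : ∀ (x : A), x ∈ P i0 l0 → ∀ (k : ℕ) (a : A), a ∈ P i0 l0 →
      repop op x k a ∈ P i0 l0 := by
    intro x hx k
    induction k with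
    | zero => intro a ha; exact ha
    | succ k ih => intro a ha; exact hPmul i0 i0 l0 l0 x hx _ (ih a ha)
  have repPull : ∀ (x : A), x ∈ P i0 l0 → ∀ (k : ℕ) (a b : A), a ∈ P i0 l0 → b ∈ P i0 l0 →
      op a (repop op x k b) = repop op x k (op a b) := by
    intro x hx k
    induction k with
    | zero => intro a b _ _; rfl
    | succ k ih =>
        intro a b ha hb
        calc op a (op x (repop op x k b))
            = op (op a x) (repop op x k b) := (hassoc _ _ _).symm
          _ = op (op x a) (repop op x k b) := by rw [he₀comm a ha x hx]
          _ = op x (op a (repop op x k b)) := hassoc _ _ _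
          _ = op x (repop op x k (op a b)) := by rw [ih a b ha hb]
  have repSplit : ∀ (x : A), x ∈ P i0 l0 → ∀ (m k : ℕ) (a b : A), a ∈ P i0 l0 →
      b ∈ P i0 l0 → op (repop op x m a) (repop op x k b) = repop op x (m + k) (op a b) := by
    intro x hx m
    induction m with
    | zero =>
        intro k a b ha hb
        rw [Nat.zero_add]
        exact repPull x hx k a b ha hb
    | succ m ih =>
        intro k a b ha hb
        have h1 : repop op x (m+1) a = op x (repop op x m a) := rfl
        have h2 : repop op x (m+1+k) (op a b) = op x (repop op x (m+k) (op a b)) := by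
          rw [show m+1+k = (m+k)+1 by omega]; rfl
        rw [h1, h2, hassoc, ih k a b ha hb]
  have repCancel : ∀ (x : A), x ∈ P i0 l0 → ∀ (k : ℕ) (a b : A), a ∈ P i0 l0 →
      b ∈ P i0 l0 → repop op x k a = repop op x k b → a = b := by
    intro x hx k
    induction k with
    | zero => intro a b _ _ hk; exact hk
    | succ k ih =>
        intro a b ha hb hk
        obtain ⟨y, hy, hxy⟩ := he₀inv x hx
        have hyx : op y x = e₀ := by rw [he₀comm y hy x hx]; exact hxy
        have hk' : op x (repop op x k a) = op x (repop op x k b) := hk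
        have h1 : op y (op x (repop op x k a)) = op y (op x (repop op x k b)) := by rw [hk']
        have h2 : ∀ z : A, z ∈ P i0 l0 → op y (op x z) = z := by
          intro z hz
          rw [← hassoc, hyx]
          exact (he₀id z hz).1
        have := h2 (repop op x k a) (repMem x hx k a ha)
        rw [this] at h1
        rw [h2 (repop op x k b) (repMem x hx k b hb)] at h1
        exact ih a b ha hb h1
  have hφe₀ : φ e₀ = e₀ := by rw [hφ, he₀e, he₀e]
  -- the power expansion of φ of an evaluation
  have hΦ : ∀ (x : A) (c' : Fin n → A) (s : GTerm A (n + 1)),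
      φ (GTerm.eval op s (Fin.cons x c')) =
        repop op (φ x) (kcount s) (φ (GTerm.eval op s (Fin.cons e₀ c'))) := by
    intro x c' s
    induction s with
    | var i =>
        cases i using Fin.cases with
        | zero =>
            have h0 : ∀ z : A, GTerm.eval op (GTerm.var (0 : Fin (n+1))) (Fin.cons z c') = z :=
              fun z => by simp [GTerm.eval]
            have hk : kcount (GTerm.var 0 : GTerm A (n+1)) = 1 := by simp [kcount]
            rw [h0, h0, hk]
            show φ x = op (φ x) (repop op (φ x) 0 (φ e₀))
            show φ x = op (φ x) (φ e₀)
            rw [hφe₀]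
            exact (rAbsorb (hφmem x) he₀ he₀e).symm
        | succ j =>
            have hk : kcount (GTerm.var j.succ : GTerm A (n+1)) = 0 := by
              simp [kcount, Fin.succ_ne_zero]
            have h0 : ∀ z : A, GTerm.eval op (GTerm.var (j.succ : Fin (n+1)))
                (Fin.cons z c') = c' j := fun z => by simp [GTerm.eval]
            rw [h0, h0, hk]
            rfl
    | const a =>
        have hk : kcount (GTerm.const a : GTerm A (n+1)) = 0 := by simp [kcount]
        rw [hk]
        simp [GTerm.eval, repop]
    | mul s r ihs ihr =>
        simp only [GTerm.eval, kcount]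
        rw [hom, ihs, ihr,
          repSplit (φ x) (hφmem x) (kcount s) (kcount r) _ _ (hφmem _) (hφmem _), ← hom]
  -- block-of-product and leaf lemmas
  have hblkprod : ∀ x y : A, pk (σf (op x y)) = ((pk (σf x)).1, (pk (σf y)).2) := by
    intro x y
    have hmem2 : op x y ∈ P (pk (σf x)).1 (pk (σf y)).2 := by
      rw [hmulσ]
      exact hPmul _ _ _ _ _ (hpk (σf x)) _ (hpk (σf y))
    exact (hpku (σf (op x y)) ((pk (σf x)).1, (pk (σf y)).2)
      (by rw [hσT _ (hmulT x y)]; exact hmem2)).symm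
  have hRow : ∀ (s : GTerm A (n + 1)) (w : Fin (n + 1) → A),
      (pk (σf (GTerm.eval op s w))).1 = (pk (σf (Sum.elim id w (firstLeaf s)))).1 := by
    intro s
    induction s with
    | var i => intro w; simp [GTerm.eval, firstLeaf]
    | const a => intro w; simp [GTerm.eval, firstLeaf]
    | mul s r ihs ihr =>
        intro w
        simp only [GTerm.eval, firstLeaf]
        rw [hblkprod]
        exact ihs w
  have hCol : ∀ (s : GTerm A (n + 1)) (w : Fin (n + 1) → A),
      (pk (σf (GTerm.eval op s w))).2 = (pk (σf (Sum.elim id w (lastLeaf s)))).2 := by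
    intro s
    induction s with
    | var i => intro w; simp [GTerm.eval, lastLeaf]
    | const a => intro w; simp [GTerm.eval, lastLeaf]
    | mul s r ihs ihr =>
        intro w
        simp only [GTerm.eval, lastLeaf]
        rw [hblkprod]
        exact ihr w
  have hblkself : ∀ (z : A), z ∈ T → z ∈ P (pk (σf z)).1 (pk (σf z)).2 := by
    intro z hz
    have := hpk (σf z)
    rwa [hσT z hz] at this
  -- now the main argument
  cases t with
  | var i =>
      cases i using Fin.cases with
      | zero => simp [GTerm.eval]
      | succ j =>
          simp only [GTerm.eval, Fin.cons_succ] at heq ⊢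
          exact heq
  | const a => simp [GTerm.eval]
  | mul s r =>
      have hTc : GTerm.eval op (GTerm.mul s r) (Fin.cons v c) ∈ T := by
        simp only [GTerm.eval]; exact hmulT _ _
      have hTd : GTerm.eval op (GTerm.mul s r) (Fin.cons v d) ∈ T := by
        simp only [GTerm.eval]; exact hmulT _ _
      -- rows agree
      have hleafR : (pk (σf (Sum.elim id (Fin.cons v c) (firstLeaf (GTerm.mul s r))))).1 =
          (pk (σf (Sum.elim id (Fin.cons v d) (firstLeaf (GTerm.mul s r))))).1 := by
        have hU : (pk (σf (GTerm.eval op (GTerm.mul s r) (Fin.cons u c)))).1 =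
            (pk (σf (GTerm.eval op (GTerm.mul s r) (Fin.cons u d)))).1 :=
          congrArg (fun z => (pk (σf z)).1) heq
        rw [hRow _ (Fin.cons u c), hRow _ (Fin.cons u d)] at hU
        rcases hfl : firstLeaf (GTerm.mul s r) with a | i
        · rfl
        · rw [hfl] at hU
          cases i using Fin.cases with
          | zero => simp only [Sum.elim_inr, Fin.cons_zero]
          | succ j =>
              simp only [Sum.elim_inr, Fin.cons_succ] at hU ⊢
              exact hU
      have hleafC : (pk (σf (Sum.elim id (Fin.cons v c) (lastLeaf (GTerm.mul s r))))).2 =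
          (pk (σf (Sum.elim id (Fin.cons v d) (lastLeaf (GTerm.mul s r))))).2 := by
        have hU : (pk (σf (GTerm.eval op (GTerm.mul s r) (Fin.cons u c)))).2 =
            (pk (σf (GTerm.eval op (GTerm.mul s r) (Fin.cons u d)))).2 :=
          congrArg (fun z => (pk (σf z)).2) heq
        rw [hCol _ (Fin.cons u c), hCol _ (Fin.cons u d)] at hU
        rcases hfl : lastLeaf (GTerm.mul s r) with a | i
        · rfl
        · rw [hfl] at hU
          cases i using Fin.cases with
          | zero => simp only [Sum.elim_inr, Fin.cons_zero]
          | succ j =>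
              simp only [Sum.elim_inr, Fin.cons_succ] at hU ⊢
              exact hU
      have hRowEq : (pk (σf (GTerm.eval op (GTerm.mul s r) (Fin.cons v c)))).1 =
          (pk (σf (GTerm.eval op (GTerm.mul s r) (Fin.cons v d)))).1 := by
        rw [hRow _ (Fin.cons v c), hRow _ (Fin.cons v d)]
        exact hleafR
      have hColEq : (pk (σf (GTerm.eval op (GTerm.mul s r) (Fin.cons v c)))).2 =
          (pk (σf (GTerm.eval op (GTerm.mul s r) (Fin.cons v d)))).2 := by
        rw [hCol _ (Fin.cons v c), hCol _ (Fin.cons v d)]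
        exact hleafC
      -- φ agree
      have hphiU : φ (GTerm.eval op (GTerm.mul s r) (Fin.cons u c)) =
          φ (GTerm.eval op (GTerm.mul s r) (Fin.cons u d)) := congrArg φ heq
      rw [hΦ u c (GTerm.mul s r), hΦ u d (GTerm.mul s r)] at hphiU
      have hphi0 : φ (GTerm.eval op (GTerm.mul s r) (Fin.cons e₀ c)) =
          φ (GTerm.eval op (GTerm.mul s r) (Fin.cons e₀ d)) :=
        repCancel (φ u) (hφmem u) (kcount (GTerm.mul s r)) _ _ (hφmem _) (hφmem _) hphiU
      have hphiV : φ (GTerm.eval op (GTerm.mul s r) (Fin.cons v c)) =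
          φ (GTerm.eval op (GTerm.mul s r) (Fin.cons v d)) := by
        rw [hΦ v c (GTerm.mul s r), hΦ v d (GTerm.mul s r), hphi0]
      -- conclude
      have hmemc := hblkself _ hTc
      have hmemd := hblkself _ hTd
      rw [← hRowEq, ← hColEq] at hmemd
      exact hrec hmemc hmemd hphiV

end Aux

/-- A semigroup satisfying condition (*) is an Abelian algebra iff it is an
inflation of a subsemigroup which is a rectangular band of Abelian groups and the
product of any two idempotents is an idempotent. -/
theorem stmt_16 {A : Type u} (op : A → A → A)
    (hassoc : ∀ a b c : A, op (op a b) c = op a (op b c))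
    (hstar : CondStar op) :
    IsAbelianGroupoid op ↔
      ((∃ T : Set A, IsInflation op T ∧ IsRectBandOfAbelianGroupsOn op T) ∧
       (∀ e f : A, op e e = e → op f f = f → op (op e f) (op e f) = op e f)) := by
  exact ⟨fun hab => forward_dir hassoc hstar hab, fun h => backward_dir hassoc h⟩
end

section
/- A semigroup ⟨A,·⟩ is a rectangular band of Abelian groups in which the product of any two idempotents is an idempotent if and only if ⟨A,·⟩ is isomorphic as a semigroup to a direct product ⟨H,·⟩ × ⟨I,·⟩ × ⟨J,·⟩ (with componentwise operation), where ⟨H,·⟩ is an Abelian group, ⟨I,·⟩ is a left zero semigroup (x·y = x for all x,y) and ⟨J,·⟩ is a right zero semigroup (x·y = y for all x,y). -/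
universe u

/-- A semigroup is a rectangular band of Abelian groups in which the product of
any two idempotents is an idempotent iff it is isomorphic to a direct product
`H × I × J` of an Abelian group `H`, a left zero semigroup `I` and a right zero
semigroup `J`. -/
theorem stmt_17 {A : Type u} (op : A → A → A)
    (hassoc : ∀ a b c : A, op (op a b) c = op a (op b c)) :
    (IsRectBandOfAbelianGroupsOn op (Set.univ : Set A) ∧
     (∀ e f : A, op e e = e → op f f = f → op (op e f) (op e f) = op e f)) ↔
    (∃ (H I J : Type u) (opH : H → H → H) (opI : I → I → I) (opJ : J → J → J)
        (φ : A ≃ H × I × J),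
      (∀ x y z : H, opH (opH x y) z = opH x (opH y z)) ∧
      (∀ x y : H, opH x y = opH y x) ∧
      (∃ e : H, (∀ x : H, opH e x = x) ∧ (∀ x : H, ∃ y : H, opH x y = e)) ∧
      (∀ x y : I, opI x y = x) ∧
      (∀ x y : J, opJ x y = y) ∧
      (∀ x y : A, φ (op x y) =
        (opH (φ x).1 (φ y).1, opI (φ x).2.1 (φ y).2.1, opJ (φ x).2.2 (φ y).2.2))) := by
  constructor
  · rintro ⟨⟨ι, κ, P, hne, huniq, hgrp, hrect⟩, hidem⟩
    by_cases hA : Nonempty A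
    · obtain ⟨a0⟩ := hA
      obtain ⟨⟨i0, l0⟩, ha0, -⟩ := huniq a0 trivial
      have hclos : ∀ (i : ι) (l : κ), ∀ x ∈ P i l, ∀ y ∈ P i l, op x y ∈ P i l :=
        fun i l => (hgrp i l).1
      -- index function
      obtain ⟨idx, hmem⟩ : ∃ f : A → ι × κ, ∀ a, a ∈ P (f a).1 (f a).2 :=
        ⟨fun a => ((huniq a trivial).exists).choose, fun a => ((huniq a trivial).exists).choose_spec⟩
      have huq : ∀ (a : A) (i : ι) (l : κ), a ∈ P i l → idx a = (i, l) := by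
        intro a i l h
        obtain ⟨p, _, hup⟩ := huniq a trivial
        rw [hup (idx a) (hmem a), hup (i, l) h]
      -- identities of the groups
      obtain ⟨E, hEmem, hEid, hEinv, hEcomm⟩ :
          ∃ E : ι → κ → A, (∀ i l, E i l ∈ P i l) ∧
            (∀ i l, ∀ x ∈ P i l, op (E i l) x = x ∧ op x (E i l) = x) ∧
            (∀ i l, ∀ x ∈ P i l, ∃ y ∈ P i l, op x y = E i l) ∧
            (∀ i l, ∀ x ∈ P i l, ∀ y ∈ P i l, op x y = op y x) := by
        choose E h1 h2 h3 h4 using fun i l => (hgrp i l).2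
        exact ⟨E, h1, h2, h3, h4⟩
      -- products of the idempotents
      have L1 : ∀ (i j : ι) (l m : κ), op (E i l) (E j m) = E i m := by
        intro i j l m
        have hx : op (E i l) (E j m) ∈ P i m :=
          hrect i j l m _ (hEmem i l) _ (hEmem j m)
        have hxx : op (op (E i l) (E j m)) (op (E i l) (E j m)) = op (E i l) (E j m) :=
          hidem _ _ ((hEid i l _ (hEmem i l)).1) ((hEid j m _ (hEmem j m)).1)
        obtain ⟨y, hy, hxy⟩ := hEinv i m _ hx
        calc op (E i l) (E j m) = op (op (E i l) (E j m)) (E i m) :=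
              ((hEid i m _ hx).2).symm
          _ = op (op (E i l) (E j m)) (op (op (E i l) (E j m)) y) := by rw [hxy]
          _ = op (op (op (E i l) (E j m)) (op (E i l) (E j m))) y := (hassoc _ _ _).symm
          _ = op (op (E i l) (E j m)) y := by rw [hxx]
          _ = E i m := hxy
      have L2 : ∀ (i : ι) (l m : κ), ∀ a ∈ P i l, op (E i m) a = a := by
        intro i l m a ha
        calc op (E i m) a = op (E i m) (op (E i l) a) := by rw [(hEid i l a ha).1]
          _ = op (op (E i m) (E i l)) a := (hassoc _ _ _).symm
          _ = op (E i l) a := by rw [L1]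
          _ = a := (hEid i l a ha).1
      have L3 : ∀ (i j : ι) (l : κ), ∀ a ∈ P i l, op a (E j l) = a := by
        intro i j l a ha
        calc op a (E j l) = op (op a (E i l)) (E j l) := by rw [(hEid i l a ha).2]
          _ = op a (op (E i l) (E j l)) := hassoc _ _ _
          _ = op a (E i l) := by rw [L1]
          _ = a := (hEid i l a ha).2
      have L4 : ∀ (i j : ι) (l m : κ), ∀ a ∈ P i l, op a (E j m) = op a (E i m) := by
        intro i j l m a ha
        calc op a (E j m) = op (op a (E i l)) (E j m) := by rw [(hEid i l a ha).2]
          _ = op a (op (E i l) (E j m)) := hassoc _ _ _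
          _ = op a (E i m) := by rw [L1]
      have M : ∀ a b : A, op a (op b (E i0 l0)) = op (op a (E i0 l0)) (op b (E i0 l0)) := by
        intro a b
        have hc : op b (E i0 l0) ∈ P (idx b).1 l0 :=
          hrect (idx b).1 i0 (idx b).2 l0 b (hmem b) _ (hEmem i0 l0)
        calc op a (op b (E i0 l0))
            = op a (op (E (idx b).1 l0) (op b (E i0 l0))) := by
              rw [L2 (idx b).1 l0 l0 _ hc]
          _ = op (op a (E (idx b).1 l0)) (op b (E i0 l0)) := (hassoc _ _ _).symm
          _ = op (op a (E (idx a).1 l0)) (op b (E i0 l0)) := by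
              rw [L4 (idx a).1 (idx b).1 (idx a).2 l0 a (hmem a)]
          _ = op (op a (E i0 l0)) (op b (E i0 l0)) := by
              rw [← L4 (idx a).1 i0 (idx a).2 l0 a (hmem a)]
      have hee : op (E i0 l0) (E i0 l0) = E i0 l0 := (hEid i0 l0 _ (hEmem i0 l0)).1
      have Fhom : ∀ a b : A,
          op (E i0 l0) (op (op a b) (E i0 l0)) =
          op (op (E i0 l0) (op a (E i0 l0))) (op (E i0 l0) (op b (E i0 l0))) := by
        intro a b
        have h2 : op (op a (E i0 l0)) (op (E i0 l0) (op b (E i0 l0))) =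
            op (op a (E i0 l0)) (op b (E i0 l0)) := by
          rw [hassoc a, ← hassoc (E i0 l0) (E i0 l0), hee, ← hassoc a]
        calc op (E i0 l0) (op (op a b) (E i0 l0))
            = op (E i0 l0) (op a (op b (E i0 l0))) := by rw [hassoc a b]
          _ = op (E i0 l0) (op (op a (E i0 l0)) (op b (E i0 l0))) := by rw [M a b]
          _ = op (E i0 l0) (op (op a (E i0 l0)) (op (E i0 l0) (op b (E i0 l0)))) := by
              rw [h2]
          _ = op (op (E i0 l0) (op a (E i0 l0))) (op (E i0 l0) (op b (E i0 l0))) :=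
              (hassoc _ _ _).symm
      have hfm : ∀ a : A, op (E i0 l0) (op a (E i0 l0)) ∈ P i0 l0 := fun a =>
        hrect i0 (idx a).1 l0 l0 _ (hEmem i0 l0) _
          (hrect (idx a).1 i0 (idx a).2 l0 a (hmem a) _ (hEmem i0 l0))
      refine ⟨↥(P i0 l0), ι, κ,
        (fun x y => ⟨op x.1 y.1, hclos i0 l0 x.1 x.2 y.1 y.2⟩),
        (fun x _ => x), (fun _ y => y),
        ⟨fun a => (⟨op (E i0 l0) (op a (E i0 l0)), hfm a⟩, (idx a).1, (idx a).2),
         fun g => op (E g.2.1 g.2.2) (op (g.1 : A) (E g.2.1 g.2.2)), ?_, ?_⟩,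
        ?_, ?_, ?_, ?_, ?_, ?_⟩
      · -- left inverse
        intro a
        have ha : a ∈ P (idx a).1 (idx a).2 := hmem a
        simp only
        calc op (E (idx a).1 (idx a).2)
              (op (op (E i0 l0) (op a (E i0 l0))) (E (idx a).1 (idx a).2))
            = op (E (idx a).1 (idx a).2)
              (op (E i0 l0) (op a (op (E i0 l0) (E (idx a).1 (idx a).2)))) := by
              rw [hassoc, hassoc]
          _ = op (E (idx a).1 (idx a).2) (op (E i0 l0) a) := by
              rw [L1, L3 (idx a).1 i0 (idx a).2 a ha]
          _ = op (op (E (idx a).1 (idx a).2) (E i0 l0)) a := (hassoc _ _ _).symm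
          _ = op (E (idx a).1 l0) a := by rw [L1]
          _ = a := L2 (idx a).1 (idx a).2 l0 a ha
      · -- right inverse
        rintro ⟨⟨h, hh⟩, i, l⟩
        have hg' : op (E i l) (op h (E i l)) ∈ P i l :=
          hrect i i0 l l _ (hEmem i l) _ (hrect i0 i l0 l h hh _ (hEmem i l))
        have hidxg : idx (op (E i l) (op h (E i l))) = (i, l) := huq _ i l hg'
        have hc : op (E i0 l0) (op (op (E i l) (op h (E i l))) (E i0 l0)) = h := by
          calc op (E i0 l0) (op (op (E i l) (op h (E i l))) (E i0 l0))
              = op (E i0 l0) (op (E i l) (op h (op (E i l) (E i0 l0)))) := by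
                rw [hassoc, hassoc]
            _ = op (E i0 l0) (op (E i l) h) := by rw [L1, L3 i0 i l0 h hh]
            _ = op (op (E i0 l0) (E i l)) h := (hassoc _ _ _).symm
            _ = op (E i0 l) h := by rw [L1]
            _ = h := L2 i0 l0 l h hh
        simp only
        refine Prod.ext (Subtype.ext hc) (Prod.ext ?_ ?_) <;> rw [hidxg]
      · intro x y z; exact Subtype.ext (hassoc x.1 y.1 z.1)
      · intro x y; exact Subtype.ext (hEcomm i0 l0 x.1 x.2 y.1 y.2)
      · refine ⟨⟨E i0 l0, hEmem i0 l0⟩, fun x => Subtype.ext ((hEid i0 l0 x.1 x.2).1),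
          fun x => ?_⟩
        obtain ⟨y, hy, hxy⟩ := hEinv i0 l0 x.1 x.2
        exact ⟨⟨y, hy⟩, Subtype.ext hxy⟩
      · intro x y; rfl
      · intro x y; rfl
      · intro x y
        have hxy : idx (op x y) = ((idx x).1, (idx y).2) :=
          huq _ _ _ (hrect (idx x).1 (idx y).1 (idx x).2 (idx y).2 x (hmem x) y (hmem y))
        simp only [Equiv.coe_fn_mk]
        refine Prod.ext (Subtype.ext (Fhom x y)) (Prod.ext ?_ ?_) <;> rw [hxy]
    · haveI : IsEmpty A := not_nonempty_iff.mp hA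
      refine ⟨PUnit, A, PUnit, (fun _ _ => PUnit.unit), (fun x _ => x), (fun _ y => y),
        Equiv.equivOfIsEmpty A _, ?_, ?_, ?_, ?_, ?_, ?_⟩
      · intro x y z; rfl
      · intro x y; rfl
      · exact ⟨PUnit.unit, fun x => rfl, fun x => ⟨PUnit.unit, rfl⟩⟩
      · intro x y; rfl
      · intro x y; rfl
      · intro x y; exact isEmptyElim x
  · rintro ⟨H, I, J, opH, opI, opJ, φ, hHa, hHc, ⟨e, he, hinv⟩, hI, hJ, hphi⟩
    constructor
    · refine ⟨I, J, fun i j => {a | (φ a).2.1 = i ∧ (φ a).2.2 = j}, ?_, ?_, ?_, ?_⟩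
      · intro i j
        refine ⟨⟨φ.symm (e, i, j), ?_, ?_⟩, fun _ _ => trivial⟩ <;> simp
      · intro a _
        refine ⟨((φ a).2.1, (φ a).2.2), ⟨rfl, rfl⟩, ?_⟩
        rintro ⟨i, j⟩ ⟨h1, h2⟩
        exact Prod.ext h1.symm h2.symm
      · intro i j
        constructor
        · intro x hx y hy
          refine ⟨?_, ?_⟩ <;> simp only [Set.mem_setOf_eq, hphi]
          · rw [hI, hx.1]
          · rw [hJ, hy.2]
        · refine ⟨φ.symm (e, i, j), by constructor <;> simp, ?_, ?_, ?_⟩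
          · intro x hx
            constructor
            · apply φ.injective
              rw [hphi, Equiv.apply_symm_apply]
              rw [he, hI, hJ]
              exact Prod.ext rfl (Prod.ext hx.1.symm rfl)
            · apply φ.injective
              rw [hphi, Equiv.apply_symm_apply]
              rw [hHc, he, hI, hJ]
              exact Prod.ext rfl (Prod.ext rfl hx.2.symm)
          · intro x hx
            obtain ⟨y', hy'⟩ := hinv (φ x).1
            refine ⟨φ.symm (y', i, j), by constructor <;> simp, ?_⟩
            apply φ.injective
            rw [hphi, Equiv.apply_symm_apply, Equiv.apply_symm_apply]
            rw [hy', hI, hJ]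
            exact Prod.ext rfl (Prod.ext hx.1 rfl)
          · intro x hx y hy
            apply φ.injective
            rw [hphi, hphi]
            refine Prod.ext (hHc _ _) (Prod.ext ?_ ?_)
            · rw [hI, hI, hx.1, hy.1]
            · rw [hJ, hJ, hx.2, hy.2]
      · intro i j l m x hx y hy
        refine ⟨?_, ?_⟩ <;> simp only [Set.mem_setOf_eq, hphi]
        · rw [hI, hx.1]
        · rw [hJ, hy.2]
    · intro e' f' he' hf'
      have h1 : opH (φ e').1 (φ e').1 = (φ e').1 := by
        have := congrArg φ he'
        rw [hphi] at this
        exact congrArg Prod.fst this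
      have h2 : opH (φ f').1 (φ f').1 = (φ f').1 := by
        have := congrArg φ hf'
        rw [hphi] at this
        exact congrArg Prod.fst this
      apply φ.injective
      have key : opH (opH (φ e').1 (φ f').1) (opH (φ e').1 (φ f').1) =
          opH (φ e').1 (φ f').1 := by
        rw [hHa, ← hHa (φ f').1 (φ e').1, hHc (φ f').1 (φ e').1,
          hHa (φ e').1 (φ f').1 (φ f').1, h2, ← hHa, h1]
      simp only [hphi, hI, hJ, key]
end
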